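/- arXiv:1812.02955 — 5 statements merged into one kernel-verified Lean document; each statement's English description precedes it below -/
import Mathlib

section
/- For positive integers n, k, r and ℓ, the mixed associated Stirling number of the second kind satisfies S_{≥ℓ}(n,k,r) = Σ_{i=r}^{n} (n choose i) · {i brace r}_{≥ℓ} · {n−i brace k−1}_{≥ℓ} · (k−1)!. -/
/-- The associated Stirling number of the second kind `{n brace k}_{≥ ℓ}`: the number of
partitions of an `n`-element set into exactly `k` nonempty blocks, each of size at least `ℓ`. -/
noncomputable def stirlingGe (l n k : ℕ) : ℕ :=
  Nat.card {P : Finpartition (Finset.univ : Finset (Fin n)) //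
    P.parts.card = k ∧ ∀ B ∈ P.parts, l ≤ B.card}

/-- The mixed associated Stirling number of the second kind `S_{≥ ℓ}(n, k, r)`: the number of
pairs `(π, (B_2, …, B_k))` where `B_2, …, B_k` are pairwise disjoint nonempty subsets of
`{1, …, n}` of size at least `ℓ` and `π` is a partition of the complement of their union into
exactly `r` nonempty blocks, each of size at least `ℓ`. -/
noncomputable def mixedStirlingGe (l n k r : ℕ) : ℕ :=
  Nat.card {x : Σ B : Fin (k - 1) → Finset (Fin n),
      Finpartition ((Finset.univ : Finset (Fin n)) \ Finset.univ.biUnion B) //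
    (∀ i, (x.1 i).Nonempty) ∧ (∀ i, l ≤ (x.1 i).card) ∧
    (∀ i j, i ≠ j → Disjoint (x.1 i) (x.1 j)) ∧
    x.2.parts.card = r ∧ ∀ p ∈ x.2.parts, l ≤ p.card}


/-!
Remove the `k - 1` ordered blocks first: what is left is a set `S`, and the pair is a partition of
`S` into `r` blocks together with an ordered family of `k - 1` blocks whose union is the complement
of `S`. Forgetting the order of the family is `(k - 1)!`-to-one onto partitions of the complement,
and the number of partitions of a finite set depends only on its cardinality, so the pairs with a
given `S` number `{#S brace r}_{≥ℓ} {n - #S brace k - 1}_{≥ℓ} (k - 1)!`. Grouping the sets `S` by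
cardinality gives the binomial coefficients; sizes `i < r` contribute nothing.
-/

open Finset Function

lemma Finset.image_univ_coe_equiv {ι β : Type*} [Fintype ι] [DecidableEq β] (s : Finset β)
    (e : ι ≃ s) : univ.image (fun i => (e i : β)) = s := by
  ext b
  simp only [mem_image, mem_univ, true_and]
  exact ⟨fun ⟨i, hi⟩ => hi ▸ (e i).2, fun hb => ⟨e.symm ⟨b, hb⟩, by simp⟩⟩

namespace Finpartition

variable {α β : Type*} [DecidableEq α] [DecidableEq β] {s : Finset α}

@[simps]
def mapEmbedding (f : α ↪ β) (P : Finpartition s) : Finpartition (s.map f) where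
  parts := P.parts.map (Finset.mapEmbedding f).toEmbedding
  supIndep := by
    rw [supIndep_map, supIndep_iff_pairwiseDisjoint]
    exact (supIndep_iff_pairwiseDisjoint.1 P.supIndep).mono' fun _ _ h => by
      simpa [onFun] using h
  sup_parts := by
    ext b
    simp only [mem_sup, id, mem_map, RelEmbedding.coe_toEmbedding, Finset.mapEmbedding_apply,
      exists_exists_and_eq_and]
    constructor
    · rintro ⟨t, ht, a, ha, rfl⟩
      exact ⟨a, P.le ht ha, rfl⟩
    · rintro ⟨a, ha, rfl⟩
      obtain ⟨t, ht, hat⟩ := P.exists_mem ha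
      exact ⟨t, ht, a, hat, rfl⟩
  bot_notMem := by simp

noncomputable def comapEmbedding (f : α ↪ β) (Q : Finpartition (s.map f)) : Finpartition s where
  parts := Q.parts.preimage (Finset.mapEmbedding f) (Finset.mapEmbedding f).injective.injOn
  supIndep := by
    rw [supIndep_iff_pairwiseDisjoint]
    intro u hu v hv huv
    simp only [coe_preimage, Set.mem_preimage, mem_coe] at hu hv
    simpa [onFun] using
      (supIndep_iff_pairwiseDisjoint.1 Q.supIndep) hu hv (by simpa using huv)
  sup_parts := by
    ext a
    simp only [mem_sup, mem_preimage, id]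
    constructor
    · rintro ⟨u, hu, ha⟩
      simpa using Q.le hu (mem_map_of_mem f ha)
    · intro ha
      obtain ⟨t, ht, hat⟩ := Q.exists_mem (mem_map_of_mem f ha)
      obtain ⟨u, -, rfl⟩ := subset_map_iff.1 (Q.le ht)
      exact ⟨u, ht, by simpa using hat⟩
  bot_notMem := by simp

noncomputable def equivMapEmbedding (f : α ↪ β) (s : Finset α) :
    Finpartition s ≃ Finpartition (s.map f) where
  toFun := mapEmbedding f
  invFun := comapEmbedding f
  left_inv P := Finpartition.ext (preimage_map _ _)
  right_inv Q := by
    ext t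
    simp only [mapEmbedding_parts, comapEmbedding, mem_map, mem_preimage]
    constructor
    · rintro ⟨u, hu, rfl⟩
      exact hu
    · intro ht
      obtain ⟨u, -, rfl⟩ := subset_map_iff.1 (Q.le ht)
      exact ⟨u, ht, rfl⟩

@[simps]
def ofDisjointFamily {ι : Type*} [Fintype ι] (B : ι → Finset α) (hB : Pairwise (Disjoint on B))
    (hne : ∀ i, (B i).Nonempty) : Finpartition (univ.biUnion B) where
  parts := univ.image B
  supIndep := by
    rw [supIndep_iff_pairwiseDisjoint, coe_image, coe_univ, Set.image_univ]
    rintro _ ⟨i, rfl⟩ _ ⟨j, rfl⟩ hij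
    exact hB (ne_of_apply_ne B hij)
  sup_parts := by rw [sup_image, Function.id_comp, sup_eq_biUnion]
  bot_notMem := by
    simp only [mem_image, mem_univ, true_and, not_exists]
    exact fun i => (hne i).ne_empty

end Finpartition

open Finpartition

section PartitionsGe

variable {α β : Type*} [DecidableEq α] [DecidableEq β]

abbrev PartitionsGe (l : ℕ) (s : Finset α) (r : ℕ) : Type _ :=
  {P : Finpartition s // #P.parts = r ∧ ∀ B ∈ P.parts, l ≤ #B}

lemma natCard_partitionsGe_map (f : α ↪ β) (l : ℕ) (s : Finset α) (r : ℕ) :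
    Nat.card (PartitionsGe l (s.map f) r) = Nat.card (PartitionsGe l s r) :=
  (Nat.card_congr <| (equivMapEmbedding f s).subtypeEquiv fun P => by
    simp [equivMapEmbedding]).symm

lemma natCard_partitionsGe (l : ℕ) (s : Finset α) (r : ℕ) :
    Nat.card (PartitionsGe l s r) = stirlingGe l #s r := by
  let f : Fin #s ↪ α := s.equivFin.symm.toEmbedding.trans (Embedding.subtype (· ∈ s))
  have hs : univ.map f = s := by
    rw [← map_map, map_univ_equiv, univ_eq_attach, attach_map_val]
  calc Nat.card (PartitionsGe l s r) = Nat.card (PartitionsGe l (univ.map f) r) := by rw [hs]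
    _ = stirlingGe l #s r := natCard_partitionsGe_map f l univ r

end PartitionsGe

lemma stirlingGe_eq_zero_of_lt (l : ℕ) {n r : ℕ} (h : n < r) : stirlingGe l n r = 0 := by
  refine @Nat.card_of_isEmpty _ ⟨fun P => ?_⟩
  have := P.1.card_parts_le_card
  rw [P.2.1, card_univ, Fintype.card_fin] at this
  omega

section BlockFamilies

variable {α ι : Type*}

def IsBlockFamilyGe (l : ℕ) (B : ι → Finset α) : Prop :=
  (∀ i, (B i).Nonempty) ∧ (∀ i, l ≤ #(B i)) ∧ Pairwise (Disjoint on B)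

lemma IsBlockFamilyGe.injective {l : ℕ} {B : ι → Finset α} (hB : IsBlockFamilyGe l B) :
    Injective B :=
  injective_iff_pairwise_ne.2 <| hB.2.2.mono fun i _ hij heq =>
    (hB.1 i).ne_empty (disjoint_self.1 (by rwa [onFun, ← heq] at hij))

variable [DecidableEq α] [Fintype ι]

abbrev BlockFamiliesGe (l : ℕ) (ι : Type*) [Fintype ι] (U : Finset α) : Type _ :=
  {B : ι → Finset α // IsBlockFamilyGe l B ∧ univ.biUnion B = U}

def BlockFamiliesGe.toPartitionsGe {l : ℕ} {U : Finset α} (B : BlockFamiliesGe l ι U) :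
    PartitionsGe l U (Fintype.card ι) :=
  ⟨(ofDisjointFamily B.1 B.2.1.2.2 B.2.1.1).copy B.2.2, by
    rw [copy_parts, ofDisjointFamily_parts, card_image_of_injective _ B.2.1.injective,
      card_univ], by
    simpa using B.2.1.2.1⟩

noncomputable def BlockFamiliesGe.fiberEquiv {l : ℕ} {U : Finset α}
    (P : PartitionsGe l U (Fintype.card ι)) :
    {B : BlockFamiliesGe l ι U // B.toPartitionsGe = P} ≃ (ι ≃ P.1.parts) where
  toFun B :=
    have hP : P.1.parts = univ.image B.1.1 := (congrArg (fun Q => Q.1.parts) B.2).symm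
    Equiv.ofBijective (fun i => ⟨B.1.1 i, by rw [hP]; exact mem_image_of_mem _ (mem_univ i)⟩)
      ⟨fun i j hij => B.1.2.1.injective (congrArg Subtype.val hij), by
        rintro ⟨t, ht⟩
        rw [hP, mem_image] at ht
        obtain ⟨i, -, rfl⟩ := ht
        exact ⟨i, rfl⟩⟩
  invFun e := ⟨⟨fun i => e i,
      ⟨fun i => P.1.nonempty_of_mem_parts (e i).2, fun i => P.2.2 _ (e i).2,
        fun i j hij => P.1.disjoint (e i).2 (e j).2 (Subtype.val_injective.ne (e.injective.ne hij))⟩,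
      (image_biUnion (t := id)).symm.trans <| by
        rw [image_univ_coe_equiv, P.1.biUnion_parts]⟩,
    Subtype.ext (Finpartition.ext (image_univ_coe_equiv _ e))⟩
  left_inv _ := rfl
  right_inv _ := Equiv.ext fun _ => rfl

lemma natCard_blockFamiliesGe (l : ℕ) (U : Finset α) :
    Nat.card (BlockFamiliesGe l ι U) =
      Nat.card (PartitionsGe l U (Fintype.card ι)) * (Fintype.card ι).factorial := by
  classical
  have (P : PartitionsGe l U (Fintype.card ι)) :=
    Finite.of_equiv _ (BlockFamiliesGe.fiberEquiv P).symm
  have hfiber (P : PartitionsGe l U (Fintype.card ι)) :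
      Nat.card {B : BlockFamiliesGe l ι U // B.toPartitionsGe = P} =
        (Fintype.card ι).factorial := by
    have hcard : Fintype.card ι = Fintype.card P.1.parts := by simp [P.2.1]
    rw [Nat.card_congr (BlockFamiliesGe.fiberEquiv P), Nat.card_eq_fintype_card,
      Fintype.card_equiv (Fintype.equivOfCardEq hcard)]
  rw [← Nat.card_congr (Equiv.sigmaFiberEquiv BlockFamiliesGe.toPartitionsGe), Nat.card_sigma]
  simp_rw [hfiber, sum_const, card_univ, smul_eq_mul, Nat.card_eq_fintype_card]

end BlockFamilies

lemma mixedStirlingGe_eq_sum (l n k r : ℕ) :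
    mixedStirlingGe l n k r = ∑ S : Finset (Fin n),
      Nat.card {B : Fin (k - 1) → Finset (Fin n) //
        IsBlockFamilyGe l B ∧ univ \ univ.biUnion B = S} * Nat.card (PartitionsGe l S r) := by
  refine (Nat.card_congr (β := Σ S : Finset (Fin n),
    {B : Fin (k - 1) → Finset (Fin n) // IsBlockFamilyGe l B ∧ univ \ univ.biUnion B = S} ×
      PartitionsGe l S r) ?_).trans ?_
  · exact
      { toFun x := ⟨_, ⟨x.1.1, ⟨x.2.1, x.2.2.1, x.2.2.2.1⟩, rfl⟩, ⟨x.1.2, x.2.2.2.2⟩⟩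
        invFun := fun ⟨_, ⟨B, hB, rfl⟩, P⟩ => ⟨⟨B, P.1⟩, hB.1, hB.2.1, hB.2.2, P.2⟩
        left_inv _ := rfl
        right_inv := fun ⟨_, ⟨_, _, rfl⟩, _⟩ => rfl }
  · simp_rw [Nat.card_sigma, Nat.card_prod]

lemma natCard_blockFamiliesGe_mul_natCard_partitionsGe (l n k r : ℕ) (S : Finset (Fin n)) :
    Nat.card {B : Fin (k - 1) → Finset (Fin n) //
        IsBlockFamilyGe l B ∧ univ \ univ.biUnion B = S} * Nat.card (PartitionsGe l S r) =
      stirlingGe l #S r * stirlingGe l (n - #S) (k - 1) * (k - 1).factorial := by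
  have hcompl (B : Fin (k - 1) → Finset (Fin n)) :
      univ \ univ.biUnion B = S ↔ univ.biUnion B = univ \ S := by
    rw [← compl_eq_univ_sdiff, ← compl_eq_univ_sdiff, compl_eq_comm, eq_comm]
  rw [Nat.card_congr (Equiv.subtypeEquivRight fun B => and_congr_right' (hcompl B)),
    natCard_blockFamiliesGe, natCard_partitionsGe, natCard_partitionsGe, card_univ_sdiff,
    Fintype.card_fin, Fintype.card_fin]
  ring

theorem mixedStirlingGe_eq_sum_stirlingGe_general (n k r l : ℕ) :
    mixedStirlingGe l n k r =
      ∑ i ∈ Finset.Icc r n,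
        n.choose i * stirlingGe l i r * stirlingGe l (n - i) (k - 1) *
          (k - 1).factorial := by
  let a i := stirlingGe l i r * stirlingGe l (n - i) (k - 1) * (k - 1).factorial
  have hvanish : ∀ i ∈ range (n + 1), i ∉ Icc r n → n.choose i • a i = 0 := fun i _ hi => by
    simp [a, stirlingGe_eq_zero_of_lt l (show i < r by simp_all)]
  calc mixedStirlingGe l n k r = ∑ S : Finset (Fin n), a #S := by
        simp_rw [mixedStirlingGe_eq_sum, natCard_blockFamiliesGe_mul_natCard_partitionsGe, a]
    _ = ∑ i ∈ range (n + 1), n.choose i • a i := by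
        rw [← powerset_univ, sum_powerset_apply_card, card_univ, Fintype.card_fin]
    _ = ∑ i ∈ Icc r n, n.choose i • a i :=
        (sum_subset (fun i hi => by simp_all) hvanish).symm
    _ = _ := sum_congr rfl fun i _ => by simp only [a, smul_eq_mul]; ring

theorem mixedStirlingGe_eq_sum_stirlingGe (n k r l : ℕ)
    (hn : 1 ≤ n) (hk : 1 ≤ k) (hr : 1 ≤ r) (hl : 1 ≤ l) :
    mixedStirlingGe l n k r =
      ∑ i ∈ Finset.Icc r n,
        n.choose i * stirlingGe l i r * stirlingGe l (n - i) (k - 1) *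
          (k - 1).factorial :=
  mixedStirlingGe_eq_sum_stirlingGe_general n k r l
end

section
/- For positive integers n, k, r and ℓ, the mixed associated Stirling numbers of the second kind satisfy the recurrence S_{≥ℓ}(n,k,r) = Σ_{i=ℓ−1}^{n−1} (n−1 choose i) · [ (k−1)·S_{≥ℓ}(n−i−1,k−1,r) + S_{≥ℓ}(n−i−1,k,r−1) ], where the term (k−1)·S_{≥ℓ}(n−i−1,k−1,r) is taken to be 0 when k = 1. -/
/-!
Fix a point `a` of the ground set. In a mixed partition, `a` lies either in one of the `K`
labelled blocks or in one of the `r` unlabelled parts, and removing that block `C ∋ a`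
(`|C| ≥ ℓ`) leaves a mixed partition of the complement with `K - 1` labelled blocks and `r`
parts (the removed block carried one of `K` labels), resp. with `K` blocks and `r - 1` parts.
The count only depends on the size of the ground set, so grouping the sets `C` by
`|C| = i + 1` produces the factor `(n - 1).choose i`.
-/

open Finset Function

theorem Nat.card_subtype_and_add_card_subtype_and_not {γ : Type*} [Finite γ] (p q : γ → Prop) :
    Nat.card {x // p x ∧ q x} + Nat.card {x // p x ∧ ¬q x} = Nat.card {x // p x} := by
  classical
  rw [← Nat.card_sum]
  exact Nat.card_congr <| (Equiv.sumCongr (Equiv.subtypeSubtypeEquivSubtypeInter p q).symm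
    (Equiv.subtypeSubtypeEquivSubtypeInter p _).symm).trans (Equiv.sumCompl _)

theorem Fin.pairwise_insertNth {γ : Type*} {R : γ → γ → Prop} (hR : ∀ x y, R x y → R y x)
    {K : ℕ} {j : Fin (K + 1)} {c : γ} {f : Fin K → γ} :
    Pairwise (R on j.insertNth c f) ↔ (∀ i, R c (f i)) ∧ Pairwise (R on f) := by
  refine ⟨fun h => ⟨fun i => ?_, fun i i' hii' => ?_⟩, fun ⟨hc, hf⟩ i i' hii' => ?_⟩
  · simpa [onFun] using h (Fin.succAbove_ne j i).symm
  · simpa [onFun] using h (Fin.succAbove_right_injective.ne hii' : j.succAbove i ≠ _)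
  · induction i using Fin.succAboveCases j with
    | x =>
      induction i' using Fin.succAboveCases j with
      | x => exact absurd rfl hii'
      | p i' => simpa [onFun] using hc i'
    | p i =>
      induction i' using Fin.succAboveCases j with
      | x => simpa [onFun] using hR _ _ (hc i)
      | p i' => simpa [onFun] using hf fun h => hii' (congrArg _ h)

variable {α β : Type*} [DecidableEq α] [DecidableEq β]

theorem Fin.univ_biUnion_insertNth {K : ℕ} (j : Fin (K + 1)) (C : Finset α)
    (B : Fin K → Finset α) :
    univ.biUnion (j.insertNth C B) = C ∪ univ.biUnion B := by
  ext a
  simp [Fin.exists_iff_succAbove j]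

theorem Finset.map_biUnion {ι : Type*} (f : α ↪ β) (s : Finset ι) (t : ι → Finset α) :
    (s.biUnion t).map f = s.biUnion fun i => (t i).map f := by
  ext b
  simp only [mem_map, mem_biUnion]
  exact ⟨fun ⟨a, ⟨i, hi, ha⟩, hb⟩ => ⟨i, hi, a, ha, hb⟩,
    fun ⟨i, hi, a, ha, hb⟩ => ⟨a, ⟨i, hi, ha⟩, hb⟩⟩

theorem Finset.sum_powerset_filter_mem_le_card {M : Type*} [AddCommMonoid M] {s : Finset α}
    {a : α} (ha : a ∈ s) (l : ℕ) (g : ℕ → M) :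
    ∑ C ∈ s.powerset with a ∈ C ∧ l ≤ #C, g #C =
      ∑ i ∈ Icc (l - 1) (#s - 1), (#s - 1).choose i • g (i + 1) := by
  have hs : #(s.erase a) = #s - 1 := card_erase_of_mem ha
  have hIcc : Icc (l - 1) (#s - 1) = {i ∈ range (#(s.erase a) + 1) | l ≤ i + 1} := by
    ext i
    simp only [mem_Icc, mem_filter, mem_range, hs]
    have := card_pos.2 ⟨a, ha⟩
    omega
  calc ∑ C ∈ s.powerset with a ∈ C ∧ l ≤ #C, g #C
      = ∑ t ∈ (s.erase a).powerset, if l ≤ #t + 1 then g (#t + 1) else 0 := by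
        rw [sum_filter]
        conv_lhs => rw [← insert_erase ha]
        rw [sum_powerset_insert (notMem_erase a s), sum_eq_zero fun t ht =>
          if_neg fun h => notMem_erase a s (mem_powerset.1 ht h.1), zero_add]
        refine sum_congr rfl fun t ht => ?_
        rw [card_insert_of_notMem fun h => notMem_erase a s (mem_powerset.1 ht h)]
        simp
    _ = _ := by
        rw [sum_powerset_apply_card (fun m => if l ≤ m + 1 then g (m + 1) else 0), hIcc,
          sum_filter, hs]
        simp_rw [smul_ite, smul_zero]

/-- The data counted by `mixedStirlingGe l n (K + 1) r`, on an arbitrary ground set `s`: the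
labelled blocks `B_2, …, B_k` are `B : Fin K → Finset α`, and the partition of the rest is a
bare set of parts `Q`, so that the ground set can be changed freely. -/
structure IsMixedPartition (l : ℕ) (s : Finset α) {K : ℕ} (r : ℕ) (B : Fin K → Finset α)
    (Q : Finset (Finset α)) : Prop where
  block_subset : ∀ i, B i ⊆ s
  le_card_block : ∀ i, l ≤ #(B i)
  pairwise_disjoint_blocks : Pairwise (Disjoint on B)
  pairwiseDisjoint_parts : (Q : Set (Finset α)).PairwiseDisjoint id
  sup_parts : Q.sup id = s \ univ.biUnion B
  card_parts : #Q = r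
  le_card_part : ∀ p ∈ Q, l ≤ #p

noncomputable def mixedPartitionCount (l : ℕ) (s : Finset α) (K r : ℕ) : ℕ :=
  Nat.card {x : (Fin K → Finset α) × Finset (Finset α) // IsMixedPartition l s r x.1 x.2}

theorem mixedStirlingGe_eq_mixedPartitionCount {l : ℕ} (hl : 1 ≤ l) (n k r : ℕ) :
    mixedStirlingGe l n k r = mixedPartitionCount l (univ : Finset (Fin n)) (k - 1) r := by
  refine Nat.card_congr
    { toFun x := ⟨(x.1.1, x.1.2.parts), ⟨fun _ => subset_univ _, x.2.2.1, fun _ _ => x.2.2.2.1 _ _,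
        supIndep_iff_pairwiseDisjoint.1 x.1.2.supIndep, x.1.2.sup_parts, x.2.2.2.2.1,
        x.2.2.2.2.2⟩⟩
      invFun x := ⟨⟨x.1.1, ⟨x.1.2, supIndep_iff_pairwiseDisjoint.2 x.2.pairwiseDisjoint_parts,
          x.2.sup_parts, fun h => by simpa using hl.trans (x.2.le_card_part _ h)⟩⟩,
        fun i => card_pos.1 (hl.trans (x.2.le_card_block i)), x.2.le_card_block,
        fun _ _ h => x.2.pairwise_disjoint_blocks h, x.2.card_parts, x.2.le_card_part⟩
      left_inv _ := rfl
      right_inv _ := rfl }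

namespace IsMixedPartition

variable {l r K : ℕ} {s p q : Finset α} {B : Fin K → Finset α} {Q : Finset (Finset α)} {a : α}

theorem part_subset (h : IsMixedPartition l s r B Q) (hp : p ∈ Q) : p ⊆ s \ univ.biUnion B :=
  h.sup_parts ▸ le_sup (f := id) hp

theorem biUnion_subset (h : IsMixedPartition l s r B Q) : univ.biUnion B ⊆ s :=
  Finset.biUnion_subset.2 fun i _ => h.block_subset i

theorem eq_of_mem_parts (h : IsMixedPartition l s r B Q) (hp : p ∈ Q) (hq : q ∈ Q)
    (hap : a ∈ p) (haq : a ∈ q) : p = q := by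
  by_contra hpq
  exact disjoint_left.1 (h.pairwiseDisjoint_parts hp hq hpq) hap haq

theorem exists_mem_part (h : IsMixedPartition l s r B Q) (ha : a ∈ s)
    (hB : a ∉ univ.biUnion B) : ∃ p ∈ Q, a ∈ p :=
  mem_sup.1 (h.sup_parts ▸ mem_sdiff.2 ⟨ha, hB⟩)

end IsMixedPartition

section

variable {l r K : ℕ} {s C : Finset α} {B : Fin K → Finset α} {Q : Finset (Finset α)}

theorem isMixedPartition_insertNth_iff (hC : C ⊆ s) {j : Fin (K + 1)} :
    IsMixedPartition l s r (j.insertNth C B) Q ↔ l ≤ #C ∧ IsMixedPartition l (s \ C) r B Q := by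
  have hsdiff : s \ univ.biUnion (j.insertNth C B) = (s \ C) \ univ.biUnion B := by
    rw [Fin.univ_biUnion_insertNth]
    exact sdiff_sdiff_left.symm
  constructor
  · intro h
    obtain ⟨hCB, hB⟩ :=
      (Fin.pairwise_insertNth (fun _ _ h => h.symm)).1 h.pairwise_disjoint_blocks
    refine ⟨by simpa using h.le_card_block j, ⟨fun i => subset_sdiff.2 ⟨?_, (hCB i).symm⟩,
      fun i => ?_, hB, h.pairwiseDisjoint_parts, hsdiff ▸ h.sup_parts, h.card_parts,
      h.le_card_part⟩⟩
    · simpa using h.block_subset (j.succAbove i)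
    · simpa using h.le_card_block (j.succAbove i)
  · rintro ⟨hlC, h⟩
    refine ⟨(Fin.forall_iff_succAbove j).2 ⟨by simpa using hC, fun i => ?_⟩,
      (Fin.forall_iff_succAbove j).2
        ⟨by simpa using hlC, fun i => by simpa using h.le_card_block i⟩,
      (Fin.pairwise_insertNth (fun _ _ h => h.symm)).2
        ⟨fun i => disjoint_of_subset_right (h.block_subset i) disjoint_sdiff,
          h.pairwise_disjoint_blocks⟩,
      h.pairwiseDisjoint_parts, hsdiff ▸ h.sup_parts, h.card_parts, h.le_card_part⟩
    simpa using (h.block_subset i).trans sdiff_subset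

theorem isMixedPartition_insert_iff (hC : C ⊆ s) (hCQ : C ∉ Q) :
    IsMixedPartition l s (r + 1) B (insert C Q) ↔
      l ≤ #C ∧ IsMixedPartition l (s \ C) r B Q := by
  constructor
  · intro h
    have hCparts : Disjoint C (Q.sup id) := Finset.disjoint_sup_right.2 fun p hp =>
      h.pairwiseDisjoint_parts (by simp) (by simp [hp]) fun h => hCQ (h ▸ hp)
    have hCB : Disjoint C (univ.biUnion B) :=
      disjoint_of_subset_left (h.part_subset (mem_insert_self C Q)) sdiff_disjoint
    refine ⟨h.le_card_part C (mem_insert_self C Q),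
      ⟨fun i => subset_sdiff.2 ⟨h.block_subset i, ?_⟩, h.le_card_block,
        h.pairwise_disjoint_blocks, h.pairwiseDisjoint_parts.subset (by simp), ?_, ?_,
        fun p hp => h.le_card_part p (mem_insert_of_mem hp)⟩⟩
    · exact (hCB.mono_right (subset_biUnion_of_mem B (mem_univ i))).symm
    · have hsup := h.sup_parts
      rw [sup_insert, id] at hsup
      rw [sdiff_right_comm, ← hsup, sup_eq_union, union_sdiff_cancel_left hCparts]
    · have hcard := h.card_parts
      rw [card_insert_of_notMem hCQ] at hcard
      omega
  · rintro ⟨hlC, h⟩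
    have hBC : Disjoint (univ.biUnion B) C := by
      simpa [disjoint_biUnion_left] using
        fun i => disjoint_of_subset_left (h.block_subset i) sdiff_disjoint
    refine ⟨fun i => (h.block_subset i).trans sdiff_subset, h.le_card_block,
      h.pairwise_disjoint_blocks, ?_, ?_, by rw [card_insert_of_notMem hCQ, h.card_parts], ?_⟩
    · rw [coe_insert, Set.pairwiseDisjoint_insert]
      exact ⟨h.pairwiseDisjoint_parts, fun p hp _ => disjoint_of_subset_right (h.part_subset hp)
        (disjoint_of_subset_right sdiff_subset disjoint_sdiff)⟩
    · rw [sup_insert, h.sup_parts, id, sdiff_right_comm, sup_eq_union,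
        union_sdiff_of_subset (subset_sdiff.2 ⟨hC, hBC.symm⟩)]
    · simpa [hlC] using h.le_card_part

theorem isMixedPartition_map_iff (f : α ↪ β) :
    IsMixedPartition l (s.map f) r (fun i => (B i).map f) (Q.image (map f)) ↔
      IsMixedPartition l s r B Q := by
  have hinj : Injective (map f) := map_injective f
  have hsup : (Q.image (map f)).sup id = (Q.sup id).map f :=
    (apply_sup_eq_sup_comp (map f) (fun _ _ => map_union _ _) (map_empty f)).symm ▸ sup_image ..
  have hdisj : (↑(Q.image (map f)) : Set (Finset β)).PairwiseDisjoint id ↔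
      (Q : Set (Finset α)).PairwiseDisjoint id := by
    rw [coe_image, hinj.injOn.pairwiseDisjoint_image]
    simp [Set.PairwiseDisjoint, Set.Pairwise, onFun]
  constructor
  · intro h
    refine ⟨fun i => by simpa using h.block_subset i, fun i => by simpa using h.le_card_block i,
      fun i j hij => by simpa [onFun] using h.pairwise_disjoint_blocks hij,
      hdisj.1 h.pairwiseDisjoint_parts, ?_,
      by simpa [card_image_of_injective _ hinj] using h.card_parts, by simpa using h.le_card_part⟩
    rw [← map_inj (f := f), ← hsup, h.sup_parts, Finset.map_sdiff, map_biUnion]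
  · intro h
    refine ⟨fun i => by simpa using h.block_subset i, fun i => by simpa using h.le_card_block i,
      fun i j hij => by simpa [onFun] using h.pairwise_disjoint_blocks hij,
      hdisj.2 h.pairwiseDisjoint_parts, ?_,
      by simpa [card_image_of_injective _ hinj] using h.card_parts, by simpa using h.le_card_part⟩
    rw [hsup, h.sup_parts, Finset.map_sdiff, map_biUnion]

end

theorem mixedPartitionCount_map (f : α ↪ β) (l : ℕ) (s : Finset α) (K r : ℕ) :
    mixedPartitionCount l (s.map f) K r = mixedPartitionCount l s K r := by
  refine (Nat.card_eq_of_bijective (fun x => ⟨(fun i => (x.1.1 i).map f, x.1.2.image (map f)),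
    (isMixedPartition_map_iff f).2 x.2⟩) ⟨?_, ?_⟩).symm
  · rintro ⟨⟨B, Q⟩, _⟩ ⟨⟨B', Q'⟩, _⟩ h
    simp only [Subtype.mk.injEq, Prod.mk.injEq, funext_iff, map_inj,
      (image_injective (map_injective f)).eq_iff] at h
    obtain ⟨hB, rfl⟩ := h
    obtain rfl : B = B' := funext hB
    rfl
  · rintro ⟨⟨B, Q⟩, h⟩
    choose B' _ hB' using fun i => subset_map_iff.1 (h.block_subset i)
    obtain ⟨Q', -, rfl⟩ := (subset_set_image_iff (s := Set.univ)).1 fun p hp => by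
      obtain ⟨u, -, rfl⟩ := subset_map_iff.1 ((h.part_subset hp).trans sdiff_subset)
      exact ⟨u, trivial, rfl⟩
    obtain rfl : B = fun i => (B' i).map f := funext hB'
    exact ⟨⟨(B', Q'), (isMixedPartition_map_iff f).1 h⟩, rfl⟩

theorem mixedPartitionCount_attach (l : ℕ) (s : Finset α) (K r : ℕ) :
    mixedPartitionCount l s.attach K r = mixedPartitionCount l s K r := by
  conv_rhs => rw [← attach_map_val (s := s)]
  exact (mixedPartitionCount_map _ _ _ _ _).symm

theorem mixedPartitionCount_eq_of_card_eq {s : Finset α} {t : Finset β} (hst : #s = #t)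
    (l K r : ℕ) : mixedPartitionCount l s K r = mixedPartitionCount l t K r := by
  let e : s ≃ t := Fintype.equivOfCardEq (by simpa using hst)
  rw [← mixedPartitionCount_attach, ← mixedPartitionCount_attach _ t, ← univ_eq_attach,
    ← univ_eq_attach, ← univ_map_equiv_to_embedding e, mixedPartitionCount_map]

section Fintype

variable [Fintype α]

theorem card_isMixedPartition_mem_blocks (l r K : ℕ) (s : Finset α) (a : α) :
    Nat.card {x : (Fin (K + 1) → Finset α) × Finset (Finset α) //
        IsMixedPartition l s r x.1 x.2 ∧ a ∈ univ.biUnion x.1} =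
      (K + 1) * ∑ C ∈ s.powerset with a ∈ C ∧ l ≤ #C, mixedPartitionCount l (s \ C) K r := by
  set A := {C ∈ s.powerset | a ∈ C ∧ l ≤ #C}
  have hA {C} : C ∈ A ↔ C ⊆ s ∧ a ∈ C ∧ l ≤ #C := by simp [A]
  let F (z : Fin (K + 1) × Σ C : A, {y : (Fin K → Finset α) × Finset (Finset α) //
      IsMixedPartition l (s \ C) r y.1 y.2}) :
      {x : (Fin (K + 1) → Finset α) × Finset (Finset α) //
        IsMixedPartition l s r x.1 x.2 ∧ a ∈ univ.biUnion x.1} :=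
    ⟨(z.1.insertNth z.2.1 z.2.2.1.1, z.2.2.1.2),
      (isMixedPartition_insertNth_iff (hA.1 z.2.1.2).1).2 ⟨(hA.1 z.2.1.2).2.2, z.2.2.2⟩,
      by simp [Fin.univ_biUnion_insertNth, (hA.1 z.2.1.2).2.1]⟩
  have hF : Bijective F := by
    constructor
    · rintro ⟨j, ⟨C, hC⟩, ⟨B, Q⟩, hy⟩ ⟨j', ⟨C', hC'⟩, ⟨B', Q'⟩, hy'⟩ h
      simp only [F, Subtype.mk.injEq, Prod.mk.injEq] at h
      obtain ⟨hBB', rfl⟩ := h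
      -- the point `a` lies in the block inserted at `j` and in no block of `B'`
      obtain rfl : j = j' := by
        by_contra hne
        obtain ⟨i, rfl⟩ := Fin.exists_succAbove_eq hne
        have hCB' : C = B' i := by simpa using congrFun hBB' (j'.succAbove i)
        have haB' : a ∈ B' i := hCB' ▸ (hA.1 hC).2.1
        exact (mem_sdiff.1 (hy'.block_subset i haB')).2 (hA.1 hC').2.1
      obtain ⟨rfl, rfl⟩ := Fin.insertNth_injective2 hBB'
      rfl
    · rintro ⟨⟨B, Q⟩, h, ha⟩
      obtain ⟨j, -, haj⟩ := mem_biUnion.1 ha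
      have hy := (isMixedPartition_insertNth_iff (h.block_subset j)).1
        (by rwa [Fin.insertNth_self_removeNth])
      exact ⟨(j, ⟨⟨B j, hA.2 ⟨h.block_subset j, haj, h.le_card_block j⟩⟩,
        ⟨(j.removeNth B, Q), hy.2⟩⟩), by simp [F]⟩
  rw [← Nat.card_eq_of_bijective F hF, Nat.card_prod, Nat.card_sigma,
    Nat.card_eq_fintype_card (α := Fin _), Fintype.card_fin]
  exact congrArg _ (sum_coe_sort A fun C => mixedPartitionCount l (s \ C) K r)

theorem card_isMixedPartition_notMem_blocks {s : Finset α} {a : α} (ha : a ∈ s) (l r K : ℕ) :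
    Nat.card {x : (Fin K → Finset α) × Finset (Finset α) //
        IsMixedPartition l s (r + 1) x.1 x.2 ∧ a ∉ univ.biUnion x.1} =
      ∑ C ∈ s.powerset with a ∈ C ∧ l ≤ #C, mixedPartitionCount l (s \ C) K r := by
  set A := {C ∈ s.powerset | a ∈ C ∧ l ≤ #C}
  have hA {C} : C ∈ A ↔ C ⊆ s ∧ a ∈ C ∧ l ≤ #C := by simp [A]
  have hCQ {C : A} {y : (Fin K → Finset α) × Finset (Finset α)}
      (hy : IsMixedPartition l (s \ C) r y.1 y.2) : (C : Finset α) ∉ y.2 := fun hC =>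
    (mem_sdiff.1 ((hy.part_subset hC).trans sdiff_subset (hA.1 C.2).2.1)).2 (hA.1 C.2).2.1
  let G (z : Σ C : A, {y : (Fin K → Finset α) × Finset (Finset α) //
      IsMixedPartition l (s \ C) r y.1 y.2}) :
      {x : (Fin K → Finset α) × Finset (Finset α) //
        IsMixedPartition l s (r + 1) x.1 x.2 ∧ a ∉ univ.biUnion x.1} :=
    ⟨(z.2.1.1, insert (z.1 : Finset α) z.2.1.2),
      (isMixedPartition_insert_iff (hA.1 z.1.2).1 (hCQ z.2.2)).2 ⟨(hA.1 z.1.2).2.2, z.2.2⟩,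
      fun h => (mem_sdiff.1 (z.2.2.biUnion_subset h)).2 (hA.1 z.1.2).2.1⟩
  have hG : Bijective G := by
    constructor
    · rintro ⟨⟨C, hC⟩, ⟨B, Q⟩, hy⟩ ⟨⟨C', hC'⟩, ⟨B', Q'⟩, hy'⟩ h
      have hx := (G ⟨⟨C', hC'⟩, ⟨B', Q'⟩, hy'⟩).2.1
      simp only [G, Subtype.mk.injEq, Prod.mk.injEq] at h hx
      obtain ⟨rfl, hQQ'⟩ := h
      obtain rfl : C = C' := hx.eq_of_mem_parts (hQQ' ▸ mem_insert_self C Q)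
        (mem_insert_self C' Q') (hA.1 hC).2.1 (hA.1 hC').2.1
      have hCQ₁ : C ∉ Q := hCQ hy
      have hCQ₂ : C ∉ Q' := hCQ hy'
      obtain rfl : Q = Q' := by rw [← erase_insert hCQ₁, hQQ', erase_insert hCQ₂]
      rfl
    · rintro ⟨⟨B, Q⟩, h, haB⟩
      obtain ⟨C, hCQ', haC⟩ := h.exists_mem_part ha haB
      have hCs : C ⊆ s := (h.part_subset hCQ').trans sdiff_subset
      have hy := (isMixedPartition_insert_iff hCs (notMem_erase C Q)).1
        (by rwa [insert_erase hCQ'])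
      exact ⟨⟨⟨C, hA.2 ⟨hCs, haC, h.le_card_part C hCQ'⟩⟩, ⟨(B, Q.erase C), hy.2⟩⟩,
        by simp [G, insert_erase hCQ']⟩
  rw [← Nat.card_eq_of_bijective G hG, Nat.card_sigma]
  exact sum_coe_sort A fun C => mixedPartitionCount l (s \ C) K r

theorem mixedPartitionCount_succ {s : Finset α} {a : α} (ha : a ∈ s) (l K r : ℕ) :
    mixedPartitionCount l s K (r + 1) = ∑ C ∈ s.powerset with a ∈ C ∧ l ≤ #C,
      (K * mixedPartitionCount l (s \ C) (K - 1) (r + 1) + mixedPartitionCount l (s \ C) K r) := by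
  rw [mixedPartitionCount,
    ← Nat.card_subtype_and_add_card_subtype_and_not _ fun x => a ∈ univ.biUnion x.1,
    card_isMixedPartition_notMem_blocks ha, sum_add_distrib, ← mul_sum]
  congr 1
  cases K with
  | zero => simp
  | succ K => exact card_isMixedPartition_mem_blocks l (r + 1) K s a

end Fintype

theorem mixedStirlingGe_recurrence_general (n k r l : ℕ)
    (hn : 1 ≤ n) (hr : 1 ≤ r) (hl : 1 ≤ l) :
    mixedStirlingGe l n k r =
      ∑ i ∈ Finset.Icc (l - 1) (n - 1),
        (n - 1).choose i *
          ((k - 1) * mixedStirlingGe l (n - i - 1) (k - 1) r +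
            mixedStirlingGe l (n - i - 1) k (r - 1)) := by
  obtain ⟨r, rfl⟩ : ∃ r', r = r' + 1 := ⟨r - 1, by omega⟩
  have hcompl (C : Finset (Fin n)) (K m : ℕ) : mixedPartitionCount l (univ \ C) K m =
      mixedPartitionCount l (univ : Finset (Fin (n - #C))) K m :=
    mixedPartitionCount_eq_of_card_eq (by simp [← compl_eq_univ_sdiff, card_compl]) l K m
  rw [mixedStirlingGe_eq_mixedPartitionCount hl,
    mixedPartitionCount_succ (mem_univ (⟨0, hn⟩ : Fin n))]
  simp only [hcompl, ← mixedStirlingGe_eq_mixedPartitionCount hl]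
  rw [sum_powerset_filter_mem_le_card (mem_univ _) l fun m =>
    (k - 1) * mixedStirlingGe l (n - m) (k - 1) (r + 1) + mixedStirlingGe l (n - m) k r]
  simp [Nat.sub_sub]

theorem mixedStirlingGe_recurrence (n k r l : ℕ)
    (hn : 1 ≤ n) (hk : 1 ≤ k) (hr : 1 ≤ r) (hl : 1 ≤ l) :
    mixedStirlingGe l n k r =
      ∑ i ∈ Finset.Icc (l - 1) (n - 1),
        (n - 1).choose i *
          ((k - 1) * mixedStirlingGe l (n - i - 1) (k - 1) r +
            mixedStirlingGe l (n - i - 1) k (r - 1)) :=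
  mixedStirlingGe_recurrence_general n k r l hn hr hl
end

section
/- For positive integers n, k, r and ℓ with n ≥ 1, the mixed associated Stirling numbers of the second kind satisfy S_{≥ℓ}(n,k,r) = (k+r−1)·S_{≥ℓ}(n−1,k,r) + (n−1 choose ℓ−1) · [ (k−1)·S_{≥ℓ}(n−ℓ,k−1,r) + S_{≥ℓ}(n−ℓ,k,r−1) ], where terms whose first argument is negative are taken to be 0 and the term (k−1)·S_{≥ℓ}(n−ℓ,k−1,r) is taken to be 0 when k = 1. -/
open Finset

theorem Nat.succ_descFactorial_eq_add (n k : ℕ) :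
    (n + 1).descFactorial k = k * n.descFactorial (k - 1) + n.descFactorial k := by
  rcases k with _ | k
  · simp
  rw [succ_descFactorial_succ, descFactorial_succ, add_tsub_cancel_right, ← add_mul]
  rcases le_or_gt k n with h | h
  · congr 1
    omega
  · simp [descFactorial_eq_zero_iff_lt.2 h]

theorem Finset.sum_congr_of_card_eq {ι κ M : Type*} [AddCommMonoid M] {A : Finset ι}
    {B : Finset κ} {f : ι → M} {g : κ → M} (hAB : #A = #B)
    (h : ∀ i ∈ A, ∀ j ∈ B, f i = g j) : ∑ i ∈ A, f i = ∑ j ∈ B, g j := by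
  rw [← sum_coe_sort A, ← sum_coe_sort B]
  exact Fintype.sum_equiv (Fintype.equivOfCardEq (by simpa using hAB)) _ _
    fun i ↦ h _ i.2 _ (Subtype.prop _)

theorem Finset.natCard_injective_mapsTo {ι β : Type*} [Fintype ι] (T : Finset β) :
    Nat.card {f : ι → β // (∀ i, f i ∈ T) ∧ Function.Injective f} =
      (#T).descFactorial (Fintype.card ι) := by
  let e : {f : ι → β // (∀ i, f i ∈ T) ∧ Function.Injective f} ≃ (ι ↪ T) :=
    { toFun f := ⟨fun i ↦ ⟨f.1 i, f.2.1 i⟩, fun i j h ↦ f.2.2 (congrArg Subtype.val h)⟩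
      invFun g := ⟨fun i ↦ g i, fun i ↦ (g i).2, Subtype.val_injective.comp g.injective⟩ }
  rw [Nat.card_congr e, Nat.card_eq_fintype_card, Fintype.card_embedding_eq, Fintype.card_coe]

namespace Finpartition

variable {α : Type*} [DecidableEq α] {s t : Finset α} {a : α}

theorem parts_avoid_biUnion (P : Finpartition s) {ι : Type*} (I : Finset ι) (B : ι → Finset α)
    (hB : ∀ i ∈ I, B i ∈ P.parts) : (P.avoid (I.biUnion B)).parts = P.parts \ I.image B := by
  have hdisj : ∀ d ∈ P.parts, d ∉ I.image B → Disjoint d (I.biUnion B) := fun d hd hdB ↦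
    (disjoint_biUnion_right _ _ _).2 fun i hi ↦
      P.disjoint hd (hB i hi) fun h ↦ hdB (mem_image.2 ⟨i, hi, h.symm⟩)
  ext c
  rw [mem_avoid, mem_sdiff]
  constructor
  · rintro ⟨d, hd, hdB, rfl⟩
    have hdB' : d ∉ I.image B := by
      rintro h
      obtain ⟨i, hi, rfl⟩ := mem_image.1 h
      exact hdB (subset_biUnion_of_mem B hi)
    rw [(hdisj d hd hdB').sdiff_eq_left]
    exact ⟨hd, hdB'⟩
  · rintro ⟨hc, hcB⟩
    have h := hdisj c hc hcB
    exact ⟨c, hc, fun hle ↦ P.ne_bot hc (h.eq_bot_of_le hle), h.sdiff_eq_left⟩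

theorem parts_avoid_of_mem (P : Finpartition s) {p : Finset α} (hp : p ∈ P.parts) :
    (P.avoid p).parts = P.parts.erase p := by
  have h := P.parts_avoid_biUnion {p} id (by simpa using hp)
  rwa [singleton_biUnion, image_singleton, sdiff_singleton_eq_erase] at h

def extendParts (P : Finpartition t) {F : Finset (Finset α)}
    (hF : (F : Set (Finset α)).PairwiseDisjoint id) (hFne : ∅ ∉ F)
    (htF : ∀ p ∈ F, Disjoint t p) (hs : t ∪ F.sup id = s) : Finpartition s where
  parts := P.parts ∪ F
  supIndep := by
    rw [supIndep_iff_pairwiseDisjoint, coe_union, Set.pairwiseDisjoint_union]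
    exact ⟨P.disjoint, hF, fun p hp q hq _ ↦ (htF q hq).mono_left (P.le hp)⟩
  sup_parts := by rw [sup_union, P.sup_parts, ← hs]; rfl
  bot_notMem := by simpa [P.bot_notMem] using hFne

def eraseElem (P : Finpartition s) (ha : a ∈ s) (h : ((P.part a).erase a).Nonempty) :
    Finpartition (s.erase a) :=
  (P.avoid (P.part a)).extend h.ne_empty
    (disjoint_of_subset_right (erase_subset _ _) sdiff_disjoint)
    (sdiff_union_erase_cancel (P.part_subset a) (P.mem_part_self.2 ha))

theorem parts_eraseElem (P : Finpartition s) (ha : a ∈ s) (h : ((P.part a).erase a).Nonempty) :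
    (P.eraseElem ha h).parts = insert ((P.part a).erase a) (P.parts.erase (P.part a)) := by
  rw [eraseElem, extend_parts, P.parts_avoid_of_mem (P.part_mem.2 ha)]

def insertElem (Q : Finpartition t) {p : Finset α} (hp : p ∈ Q.parts) (ha : a ∉ t)
    (hs : insert a t = s) : Finpartition s :=
  (Q.avoid p).extend (insert_ne_empty a p)
    (disjoint_insert_right.2 ⟨fun h ↦ ha (mem_sdiff.1 h).1, sdiff_disjoint⟩)
    (by have := Q.le hp; grind)

theorem parts_insertElem (Q : Finpartition t) {p : Finset α} (hp : p ∈ Q.parts) (ha : a ∉ t)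
    (hs : insert a t = s) :
    (Q.insertElem hp ha hs).parts = insert (insert a p) (Q.parts.erase p) := by
  rw [insertElem, extend_parts, Q.parts_avoid_of_mem hp]

theorem part_insertElem (Q : Finpartition t) {p : Finset α} (hp : p ∈ Q.parts) (ha : a ∉ t)
    (hs : insert a t = s) : (Q.insertElem hp ha hs).part a = insert a p :=
  part_eq_of_mem _ (by rw [parts_insertElem]; exact mem_insert_self _ _) (mem_insert_self a p)

theorem erase_part_mem_parts_eraseElem (P : Finpartition s) (ha : a ∈ s)
    (h : ((P.part a).erase a).Nonempty) : (P.part a).erase a ∈ (P.eraseElem ha h).parts := by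
  rw [parts_eraseElem]
  exact mem_insert_self _ _

theorem erase_part_notMem_erase_parts (P : Finpartition s) (ha : a ∈ s)
    (h : ((P.part a).erase a).Nonempty) : (P.part a).erase a ∉ P.parts.erase (P.part a) := by
  intro hq
  obtain ⟨x, hx⟩ := h
  exact ne_of_mem_erase hq (P.eq_of_mem_parts (mem_of_mem_erase hq) (P.part_mem.2 ha) hx
    (mem_of_mem_erase hx))

theorem card_parts_eraseElem (P : Finpartition s) (ha : a ∈ s)
    (h : ((P.part a).erase a).Nonempty) : #(P.eraseElem ha h).parts = #P.parts := by
  have hpart := P.part_mem.2 ha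
  rw [parts_eraseElem, card_insert_of_notMem (P.erase_part_notMem_erase_parts ha h),
    card_erase_add_one hpart]

theorem insert_notMem_erase_parts (Q : Finpartition t) {p : Finset α} (ha : a ∉ t) :
    insert a p ∉ Q.parts.erase p :=
  fun h ↦ ha (Q.le (mem_of_mem_erase h) (mem_insert_self a p))

theorem card_parts_insertElem (Q : Finpartition t) {p : Finset α} (hp : p ∈ Q.parts) (ha : a ∉ t)
    (hs : insert a t = s) : #(Q.insertElem hp ha hs).parts = #Q.parts := by
  rw [parts_insertElem, card_insert_of_notMem (Q.insert_notMem_erase_parts ha),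
    card_erase_add_one hp]

theorem insertElem_eraseElem (P : Finpartition s) (ha : a ∈ s)
    (h : ((P.part a).erase a).Nonempty) :
    (P.eraseElem ha h).insertElem (P.erase_part_mem_parts_eraseElem ha h) (notMem_erase a s)
      (insert_erase ha) = P := by
  ext1
  rw [parts_insertElem, parts_eraseElem, erase_insert (P.erase_part_notMem_erase_parts ha h),
    insert_erase (P.mem_part_self.2 ha), insert_erase (P.part_mem.2 ha)]

theorem eraseElem_insertElem (Q : Finpartition (s.erase a)) {p : Finset α} (hp : p ∈ Q.parts)
    (ha : a ∈ s)
    (h : (((Q.insertElem hp (notMem_erase a s) (insert_erase ha)).part a).erase a).Nonempty) :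
    (Q.insertElem hp (notMem_erase a s) (insert_erase ha)).eraseElem ha h = Q := by
  have hap : a ∉ p := fun h ↦ notMem_erase a s (Q.le hp h)
  ext1
  rw [parts_eraseElem, part_insertElem, parts_insertElem,
    erase_insert (Q.insert_notMem_erase_parts (notMem_erase a s)), erase_insert hap,
    insert_erase hp]

end Finpartition

section PartitionsGe

variable {α : Type*} [DecidableEq α] {l m : ℕ} {s t S : Finset α} {a : α}

def partitionsGe (l m : ℕ) (s : Finset α) : Finset (Finpartition s) :=
  {P | #P.parts = m ∧ ∀ p ∈ P.parts, l ≤ #p}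

@[simp]
theorem mem_partitionsGe {P : Finpartition s} :
    P ∈ partitionsGe l m s ↔ #P.parts = m ∧ ∀ p ∈ P.parts, l ≤ #p := by
  simp [partitionsGe]

theorem card_partitionsGe_empty :
    #(partitionsGe l m (∅ : Finset α)) = if m = 0 then 1 else 0 := by
  have hparts (P : Finpartition (∅ : Finset α)) : P.parts = ∅ := P.parts_eq_empty_iff.2 rfl
  split_ifs with hm
  · subst hm
    rw [card_eq_one]
    refine ⟨Finpartition.empty _, ?_⟩
    ext P
    simpa [hparts] using Finpartition.ext (by simp [hparts])
  · rw [card_eq_zero, eq_empty_iff_forall_notMem]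
    intro P hP
    simp [hparts] at hP
    omega

theorem partitionsGe_zero_of_nonempty (hs : s.Nonempty) : partitionsGe l 0 s = ∅ := by
  rw [eq_empty_iff_forall_notMem]
  intro P hP
  exact (P.parts_nonempty hs.ne_empty).ne_empty (card_eq_zero.1 (mem_partitionsGe.1 hP).1)

theorem eraseElem_mem_partitionsGe {P : Finpartition s} (hP : P ∈ partitionsGe l m s)
    (ha : a ∈ s) (hlt : l < #(P.part a)) (h : ((P.part a).erase a).Nonempty) :
    P.eraseElem ha h ∈ partitionsGe l m (s.erase a) := by
  obtain ⟨hcard, hsize⟩ := mem_partitionsGe.1 hP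
  refine mem_partitionsGe.2 ⟨by rw [P.card_parts_eraseElem, hcard], fun q hq ↦ ?_⟩
  rw [P.parts_eraseElem] at hq
  rcases mem_insert.1 hq with rfl | hq
  · rw [card_erase_of_mem (P.mem_part_self.2 ha)]
    omega
  · exact hsize q (mem_of_mem_erase hq)

theorem insertElem_mem_partitionsGe {Q : Finpartition t} (hQ : Q ∈ partitionsGe l m t)
    {p : Finset α} (hp : p ∈ Q.parts) (ha : a ∉ t) (hs : insert a t = s) :
    Q.insertElem hp ha hs ∈ partitionsGe l m s := by
  obtain ⟨hcard, hsize⟩ := mem_partitionsGe.1 hQ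
  refine mem_partitionsGe.2 ⟨by rw [Q.card_parts_insertElem, hcard], fun q hq ↦ ?_⟩
  rw [Q.parts_insertElem] at hq
  rcases mem_insert.1 hq with rfl | hq
  · exact (hsize p hp).trans (card_le_card (subset_insert a p))
  · exact hsize q (mem_of_mem_erase hq)

theorem card_insert_of_mem_powersetCard_erase (hl : 1 ≤ l)
    (hS : S ∈ powersetCard (l - 1) (s.erase a)) : #(insert a S) = l := by
  obtain ⟨hSs, hSl⟩ := mem_powersetCard.1 hS
  rw [card_insert_of_notMem fun h ↦ notMem_erase a s (hSs h), hSl]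
  omega

theorem card_sdiff_insert_of_mem_powersetCard_erase (hl : 1 ≤ l) (ha : a ∈ s)
    (hS : S ∈ powersetCard (l - 1) (s.erase a)) : #(s \ insert a S) = #s - l := by
  rw [card_sdiff_of_subset (insert_subset ha ((mem_powersetCard.1 hS).1.trans (erase_subset a s))),
    card_insert_of_mem_powersetCard_erase hl hS]

theorem card_partitionsGe_filter_part_eq {T : Finset α} (haT : a ∈ T) (hTs : T ⊆ s) (hlT : l ≤ #T)
    (hm : 1 ≤ m) :
    #{P ∈ partitionsGe l m s | P.part a = T} = #(partitionsGe l (m - 1) (s \ T)) := by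
  have hT : T ≠ ∅ := ne_empty_of_mem haT
  have hTQ (Q : Finpartition (s \ T)) : T ∉ Q.parts := fun h ↦ (mem_sdiff.1 (Q.le h haT)).2 haT
  refine card_nbij' (fun P ↦ P.avoid T)
    (fun Q ↦ Q.extend hT sdiff_disjoint (sdiff_union_of_subset hTs)) ?_ ?_ ?_ ?_
  · rintro P hP
    simp only [mem_coe, mem_filter, mem_partitionsGe] at hP
    obtain ⟨⟨hcard, hl⟩, rfl⟩ := hP
    have hmem := P.part_mem.2 (hTs haT)
    rw [mem_coe, mem_partitionsGe, P.parts_avoid_of_mem hmem, card_erase_of_mem hmem, hcard]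
    exact ⟨rfl, fun p hp ↦ hl p (mem_of_mem_erase hp)⟩
  · rintro Q hQ
    rw [mem_coe, mem_partitionsGe] at hQ
    rw [mem_coe, mem_filter, mem_partitionsGe, Finpartition.extend_parts,
      card_insert_of_notMem (hTQ Q), forall_mem_insert]
    exact ⟨⟨by omega, hlT, hQ.2⟩, Finpartition.part_eq_of_mem _ (mem_insert_self _ _) haT⟩
  · rintro P hP
    have hmem : T ∈ P.parts := (mem_filter.1 hP).2 ▸ P.part_mem.2 (hTs haT)
    ext1
    rw [Finpartition.extend_parts, P.parts_avoid_of_mem hmem, insert_erase hmem]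
  · rintro Q -
    have hmem : T ∈ (Q.extend hT sdiff_disjoint (sdiff_union_of_subset hTs)).parts :=
      mem_insert_self _ _
    ext1
    rw [Finpartition.parts_avoid_of_mem _ hmem, Finpartition.extend_parts, erase_insert (hTQ Q)]

theorem card_partitionsGe_filter_card_part_eq (hl : 1 ≤ l) (hm : 1 ≤ m) (ha : a ∈ s) :
    #{P ∈ partitionsGe l m s | #(P.part a) = l} =
      ∑ S ∈ powersetCard (l - 1) (s.erase a), #(partitionsGe l (m - 1) (s \ insert a S)) := by
  have hmem (P : Finpartition s) : a ∈ P.part a := P.mem_part_self.2 ha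
  rw [card_eq_sum_card_fiberwise (f := fun P ↦ (P.part a).erase a)]
  · refine sum_congr rfl fun S hS ↦ ?_
    obtain ⟨hSs, -⟩ := mem_powersetCard.1 hS
    have haS : a ∉ S := fun h ↦ notMem_erase a s (hSs h)
    have hcard := card_insert_of_mem_powersetCard_erase hl hS
    rw [← card_partitionsGe_filter_part_eq (mem_insert_self a S)
      (insert_subset ha (hSs.trans (erase_subset a s))) hcard.ge hm, filter_filter]
    congr 1
    refine filter_congr fun P _ ↦ ⟨?_, fun h ↦ ⟨h ▸ hcard, by rw [h, erase_insert haS]⟩⟩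
    rintro ⟨-, rfl⟩
    exact (insert_erase (hmem P)).symm
  · intro P hP
    rw [mem_coe, mem_powersetCard, card_erase_of_mem (hmem P), (mem_filter.1 hP).2]
    exact ⟨erase_subset_erase a (P.part_subset a), rfl⟩

theorem card_partitionsGe_filter_lt_card_part (hl : 1 ≤ l) (ha : a ∈ s) :
    #{P ∈ partitionsGe l m s | l < #(P.part a)} = m * #(partitionsGe l m (s.erase a)) := by
  have hne {P : Finpartition s} (hlt : l < #(P.part a)) : ((P.part a).erase a).Nonempty := by
    rw [← card_pos, card_erase_of_mem (P.mem_part_self.2 ha)]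
    omega
  calc _ = #((partitionsGe l m (s.erase a)).sigma fun Q ↦ Q.parts) := by
        refine card_bij' (fun P hP ↦ ⟨P.eraseElem ha (hne (mem_filter.1 hP).2), (P.part a).erase a⟩)
          (fun x hx ↦ x.1.insertElem (mem_sigma.1 hx).2 (notMem_erase a s) (insert_erase ha))
          (fun P hP ↦ ?_) (fun x hx ↦ ?_)
          (fun P hP ↦ P.insertElem_eraseElem ha (hne (mem_filter.1 hP).2))
          (fun x hx ↦ ?_)
        · obtain ⟨hPm, hlt⟩ := mem_filter.1 hP
          exact mem_sigma.2 ⟨eraseElem_mem_partitionsGe hPm ha hlt (hne hlt),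
            P.erase_part_mem_parts_eraseElem ha (hne hlt)⟩
        · obtain ⟨Q, p⟩ := x
          obtain ⟨hQm, hp⟩ := mem_sigma.1 hx
          have hap : a ∉ p := fun h ↦ notMem_erase a s (Q.le hp h)
          refine mem_filter.2 ⟨insertElem_mem_partitionsGe hQm hp _ _, ?_⟩
          rw [Q.part_insertElem, card_insert_of_notMem hap]
          exact Nat.lt_succ_of_le ((mem_partitionsGe.1 hQm).2 p hp)
        · obtain ⟨Q, p⟩ := x
          have hp := (mem_sigma.1 hx).2
          have hap : a ∉ p := fun h ↦ notMem_erase a s (Q.le hp h)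
          refine Sigma.ext (Q.eraseElem_insertElem hp ha ?_)
            (heq_of_eq (by simp only [Q.part_insertElem, erase_insert hap]))
          rw [Q.part_insertElem, erase_insert hap]
          exact Q.nonempty_of_mem_parts hp
    _ = m * #(partitionsGe l m (s.erase a)) := by
        rw [card_sigma, sum_const_nat fun Q hQ ↦ (mem_partitionsGe.1 hQ).1, mul_comm]

theorem card_partitionsGe_of_mem (hl : 1 ≤ l) (hm : 1 ≤ m) (ha : a ∈ s) :
    #(partitionsGe l m s) = m * #(partitionsGe l m (s.erase a)) +
      ∑ S ∈ powersetCard (l - 1) (s.erase a), #(partitionsGe l (m - 1) (s \ insert a S)) := by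
  rw [← card_partitionsGe_filter_lt_card_part hl ha,
    ← card_partitionsGe_filter_card_part_eq hl hm ha, add_comm,
    ← card_filter_add_card_filter_not (fun P ↦ #(P.part a) = l)]
  congr 2
  refine filter_congr fun P hP ↦ ?_
  have := (mem_partitionsGe.1 hP).2 _ (P.part_mem.2 ha)
  omega

-- Both sides satisfy the recurrence `card_partitionsGe_of_mem`, so no bijection is needed.
theorem card_partitionsGe_congr {β : Type*} [DecidableEq β] (hl : 1 ≤ l) {t : Finset β}
    (h : #s = #t) (m : ℕ) : #(partitionsGe l m s) = #(partitionsGe l m t) := by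
  induction hn : #s using Nat.strong_induction_on generalizing s t m with
  | _ n ih =>
  rcases s.eq_empty_or_nonempty with rfl | ⟨a, ha⟩
  · rw [card_eq_zero.1 (h.symm.trans card_empty), card_partitionsGe_empty, card_partitionsGe_empty]
  obtain ⟨b, hb⟩ : t.Nonempty := card_pos.1 (h ▸ card_pos.2 ⟨a, ha⟩)
  rcases Nat.eq_zero_or_pos m with rfl | hm
  · rw [partitionsGe_zero_of_nonempty ⟨a, ha⟩, partitionsGe_zero_of_nonempty ⟨b, hb⟩, card_empty,
      card_empty]
  have hpos : 0 < n := hn ▸ card_pos.2 ⟨a, ha⟩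
  have herase : #(s.erase a) = #(t.erase b) := by rw [card_erase_of_mem ha, card_erase_of_mem hb, h]
  rw [card_partitionsGe_of_mem hl hm ha, card_partitionsGe_of_mem hl hm hb]
  congr 2
  · exact ih _ (by rw [← hn, card_erase_of_mem ha]; omega) herase _ rfl
  · refine sum_congr_of_card_eq (by rw [card_powersetCard, card_powersetCard, herase])
      fun S hS T hT ↦ ih _ ?_ ?_ _ rfl
    · rw [← hn, card_sdiff_insert_of_mem_powersetCard_erase hl ha hS]; omega
    · rw [card_sdiff_insert_of_mem_powersetCard_erase hl ha hS,
        card_sdiff_insert_of_mem_powersetCard_erase hl hb hT, h]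

end PartitionsGe

-- The associated Stirling number `S_{≥ℓ}(n, m)`.
def assocStirlingGe (l n m : ℕ) : ℕ := #(partitionsGe l m (univ : Finset (Fin n)))

section AssocStirling

variable {α : Type*} [DecidableEq α] {l m n : ℕ}

theorem card_partitionsGe (hl : 1 ≤ l) (s : Finset α) (m : ℕ) :
    #(partitionsGe l m s) = assocStirlingGe l #s m :=
  card_partitionsGe_congr hl (by simp) m

theorem assocStirlingGe_recurrence (hl : 1 ≤ l) (hm : 1 ≤ m) (hn : 1 ≤ n) :
    assocStirlingGe l n m =
      m * assocStirlingGe l (n - 1) m +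
        (n - 1).choose (l - 1) * assocStirlingGe l (n - l) (m - 1) := by
  have ha := mem_univ (⟨0, hn⟩ : Fin n)
  rw [assocStirlingGe, card_partitionsGe_of_mem hl hm ha, card_partitionsGe hl,
    sum_const_nat fun S hS ↦ by
      rw [card_partitionsGe hl, card_sdiff_insert_of_mem_powersetCard_erase hl ha hS, card_fin],
    card_powersetCard, card_erase_of_mem ha, card_fin]

end AssocStirling

section Mixed

variable {ι α : Type*} [Fintype ι] [Fintype α] [DecidableEq α] {l r : ℕ}

-- The configurations counted by `mixedStirlingGe`, with `Fin (k - 1)` and `Fin n` generalized.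
variable (ι α l r) in
def MixedConfig : Type _ :=
  {x : Σ B : ι → Finset α, Finpartition (univ \ univ.biUnion B) //
    (∀ i, (x.1 i).Nonempty) ∧ (∀ i, l ≤ #(x.1 i)) ∧
    (∀ i j, i ≠ j → Disjoint (x.1 i) (x.1 j)) ∧
    #x.2.parts = r ∧ ∀ p ∈ x.2.parts, l ≤ #p}

namespace MixedConfig

theorem injective (x : MixedConfig ι α l r) : Function.Injective x.1.1 := by
  intro i j hij
  by_contra hne
  have h := x.2.2.2.1 i j hne
  rw [hij, disjoint_self_iff_empty] at h
  exact (x.2.1 j).ne_empty h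

def toPartition (x : MixedConfig ι α l r) : Finpartition (univ : Finset α) :=
  x.1.2.extendParts (F := univ.image x.1.1)
    (by
      rintro _ hp _ hq hpq
      obtain ⟨i, -, rfl⟩ := mem_image.1 hp
      obtain ⟨j, -, rfl⟩ := mem_image.1 hq
      exact x.2.2.2.1 i j (ne_of_apply_ne _ hpq))
    (fun h ↦ by
      obtain ⟨i, -, hi⟩ := mem_image.1 h
      exact (x.2.1 i).ne_empty hi)
    (fun p hp ↦ by
      obtain ⟨i, -, rfl⟩ := mem_image.1 hp
      exact disjoint_sdiff_self_left.mono_right (subset_biUnion_of_mem _ (mem_univ i)))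
    (by rw [sup_image, Function.id_comp, sup_eq_biUnion, sdiff_union_of_subset (subset_univ _)])

theorem toPartition_parts (x : MixedConfig ι α l r) :
    x.toPartition.parts = x.1.2.parts ∪ univ.image x.1.1 :=
  rfl

theorem disjoint_parts_image (x : MixedConfig ι α l r) :
    Disjoint x.1.2.parts (univ.image x.1.1) := by
  refine disjoint_left.2 fun p hp hpB ↦ ?_
  obtain ⟨i, -, rfl⟩ := mem_image.1 hpB
  obtain ⟨y, hy⟩ := x.2.1 i
  exact (mem_sdiff.1 (x.1.2.le hp hy)).2 (mem_biUnion.2 ⟨i, mem_univ i, hy⟩)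

theorem toPartition_mem (x : MixedConfig ι α l r) :
    x.toPartition ∈ partitionsGe l (Fintype.card ι + r) univ := by
  obtain ⟨-, hBl, -, hcard, hsize⟩ := x.2
  rw [mem_partitionsGe, toPartition_parts, card_union_of_disjoint x.disjoint_parts_image,
    card_image_of_injective _ x.injective, card_univ, hcard, add_comm]
  refine ⟨rfl, fun p hp ↦ (mem_union.1 hp).elim (hsize p) fun hp ↦ ?_⟩
  obtain ⟨i, -, rfl⟩ := mem_image.1 hp
  exact hBl i

def ofPartition (P : partitionsGe l (Fintype.card ι + r) (univ : Finset α)) (B : ι → Finset α)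
    (hB : ∀ i, B i ∈ P.1.parts) (hinj : Function.Injective B) : MixedConfig ι α l r :=
  have hparts : (P.1.avoid (univ.biUnion B)).parts = P.1.parts \ univ.image B :=
    P.1.parts_avoid_biUnion univ B fun i _ ↦ hB i
  have hP := mem_partitionsGe.1 P.2
  ⟨⟨B, P.1.avoid (univ.biUnion B)⟩, fun i ↦ P.1.nonempty_of_mem_parts (hB i),
    fun i ↦ hP.2 _ (hB i), fun i j hij ↦ P.1.disjoint (hB i) (hB j) (hinj.ne hij),
    by
      rw [hparts, card_sdiff_of_subset (image_subset_iff.2 fun i _ ↦ hB i),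
        card_image_of_injective _ hinj, card_univ, hP.1]
      omega,
    fun p hp ↦ hP.2 p (mem_sdiff.1 (hparts ▸ hp)).1⟩

end MixedConfig

def mixedConfigEquiv : MixedConfig ι α l r ≃
    {q : partitionsGe l (Fintype.card ι + r) (univ : Finset α) × (ι → Finset α) //
      (∀ i, q.2 i ∈ q.1.1.parts) ∧ Function.Injective q.2} where
  toFun x := ⟨(⟨x.toPartition, x.toPartition_mem⟩, x.1.1),
    fun i ↦ mem_union_right _ (mem_image_of_mem _ (mem_univ i)), x.injective⟩
  invFun q := .ofPartition q.1.1 q.1.2 q.2.1 q.2.2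
  left_inv x := by
    refine Subtype.ext (Sigma.ext rfl (heq_of_eq (Finpartition.ext ?_)))
    change (x.toPartition.avoid _).parts = _
    rw [Finpartition.parts_avoid_biUnion _ univ _ fun i _ ↦
        mem_union_right _ (mem_image_of_mem _ (mem_univ i)),
      MixedConfig.toPartition_parts, union_sdiff_cancel_right x.disjoint_parts_image]
  right_inv q := by
    refine Subtype.ext (Prod.ext (Subtype.ext (Finpartition.ext ?_)) rfl)
    change (q.1.1.1.avoid (univ.biUnion q.1.2)).parts ∪ univ.image q.1.2 = q.1.1.1.parts
    rw [Finpartition.parts_avoid_biUnion _ univ _ fun i _ ↦ q.2.1 i,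
      sdiff_union_of_subset (image_subset_iff.2 fun i _ ↦ q.2.1 i)]

theorem natCard_mixedConfig :
    Nat.card (MixedConfig ι α l r) =
      (Fintype.card ι + r).descFactorial (Fintype.card ι) *
        #(partitionsGe l (Fintype.card ι + r) (univ : Finset α)) := by
  rw [Nat.card_congr (mixedConfigEquiv.trans (Equiv.subtypeProdEquivSigmaSubtype
    fun (P : partitionsGe l (Fintype.card ι + r) (univ : Finset α)) (B : ι → Finset α) ↦
      (∀ i, B i ∈ P.1.parts) ∧ Function.Injective B)), Nat.card_sigma]
  simp_rw [natCard_injective_mapsTo]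
  rw [sum_congr rfl fun P _ ↦ by rw [(mem_partitionsGe.1 P.2).1], sum_const, card_univ,
    Fintype.card_coe, smul_eq_mul, mul_comm]

end Mixed

theorem mixedStirlingGe_succ (l n j r : ℕ) :
    mixedStirlingGe l n (j + 1) r = (j + r).descFactorial j * assocStirlingGe l n (j + r) := by
  have h := natCard_mixedConfig (ι := Fin j) (α := Fin n) (l := l) (r := r)
  rwa [Fintype.card_fin] at h

theorem mul_mixedStirlingGe (l n j r : ℕ) :
    j * mixedStirlingGe l n j (r + 1) =
      j * ((j + r).descFactorial (j - 1) * assocStirlingGe l n (j + r)) := by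
  rcases j with _ | i
  · simp
  · rw [mixedStirlingGe_succ, add_tsub_cancel_right, add_right_comm, ← add_assoc]

theorem mixedStirlingGe_recurrence' (n k r l : ℕ)
    (hn : 1 ≤ n) (hk : 1 ≤ k) (hr : 1 ≤ r) (hl : 1 ≤ l) :
    mixedStirlingGe l n k r =
      (k + r - 1) * mixedStirlingGe l (n - 1) k r +
        (n - 1).choose (l - 1) *
          ((k - 1) * mixedStirlingGe l (n - l) (k - 1) r +
            mixedStirlingGe l (n - l) k (r - 1)) := by
  obtain ⟨j, rfl⟩ : ∃ j, k = j + 1 := ⟨k - 1, by omega⟩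
  obtain ⟨q, rfl⟩ : ∃ q, r = q + 1 := ⟨r - 1, by omega⟩
  have hA := assocStirlingGe_recurrence hl (m := j + q + 1) (by omega) hn
  rw [add_tsub_cancel_right] at hA
  rw [add_tsub_cancel_right, add_tsub_cancel_right, show j + 1 + (q + 1) - 1 = j + q + 1 by omega,
    mul_mixedStirlingGe, mixedStirlingGe_succ, mixedStirlingGe_succ, mixedStirlingGe_succ,
    ← add_assoc, hA, Nat.succ_descFactorial_eq_add]
  ring
end

section
/- Let k ≥ 1 and let c_1,…,c_k be nonnegative integers. Then, as an identity of formal power series over ℚ, Σ_{n≥0} {B brace C} · x^n/n! = (exp(x) − 1)^{c_1+c_2+⋯+c_k} / (c_1!·c_2!⋯c_k!), where {B brace C} is the mixed partition number for the n-element ground set {1,…,n} and exp(x) denotes the formal exponential power series Σ_{n≥0} x^n/n!. -/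
/-!
Numbering the `c i` blocks of `π i` by `Fin (c i)`, in one of `∏ i, (c i)!` ways, turns a mixed
partition into a surjection from `{1, …, n}` onto the `m = ∑ i, c i` cells `Σ i, Fin (c i)` (the
colour class of `i` is `A i`, the fibres are the blocks), and every surjection arises exactly once.
Surjections onto an `m`-set are counted by inclusion–exclusion over the set `t` of missed cells as
`∑ t, (-1) ^ #t * (m - #t) ^ n`, which is `n!` times the coefficient of `x ^ n` in
`∏ cells, (-1 + exp x) = (exp x - 1) ^ m`.
-/

/-- The mixed partition number `{B brace C}` for ground set `{1, …, n}` and cell multiset with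
`c i` cells of label `i`: the number of tuples `(π_1, …, π_k)` whose underlying sets are
pairwise disjoint with union `{1, …, n}`, where `π i` is a partition of its underlying set into
exactly `c i` nonempty blocks. -/
noncomputable def mixedPart (n k : ℕ) (c : Fin k → ℕ) : ℕ :=
  Nat.card {x : Σ A : Fin k → Finset (Fin n), ∀ i, Finpartition (A i) //
    (∀ i j, i ≠ j → Disjoint (x.1 i) (x.1 j)) ∧
    Finset.univ.biUnion x.1 = Finset.univ ∧
    ∀ i, (x.2 i).parts.card = c i}

open Finset PowerSeries

section Surjections

variable {α β : Type*} [Fintype α] [Fintype β] [DecidableEq α] [DecidableEq β]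

theorem card_surjective_eq_sum_powerset :
    (Fintype.card {f : α → β // Function.Surjective f} : ℤ) =
      ∑ t ∈ (univ : Finset β).powerset, (-1) ^ #t * (#tᶜ : ℤ) ^ Fintype.card α := by
  set missing : β → Finset (α → β) := fun b => Fintype.piFinset fun _ => {b}ᶜ
  have inf_missing (t : Finset β) : t.inf missing = Fintype.piFinset fun _ => tᶜ := by
    ext f
    simp only [missing, Finset.mem_inf, Fintype.mem_piFinset, mem_compl, mem_singleton]
    grind
  have inf_compl_missing :
      univ.inf (fun b => (missing b)ᶜ) = ({f | Function.Surjective f} : Finset (α → β)) := by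
    ext f
    simp only [mem_filter, mem_univ, true_and]
    simp [missing, Finset.mem_inf, Function.Surjective]
  rw [Fintype.card_subtype, ← inf_compl_missing, inclusion_exclusion_card_inf_compl]
  simp [inf_missing]

theorem coeff_exp_sub_one_pow_card (N : ℕ) :
    coeff N ((exp ℚ - 1) ^ Fintype.card β) =
      (∑ t ∈ (univ : Finset β).powerset, (-1) ^ #t * (#tᶜ : ℚ) ^ N) / N.factorial := by
  have expand : (exp ℚ - 1) ^ Fintype.card β =
      ∑ t ∈ (univ : Finset β).powerset, C ((-1) ^ #t) * rescale (#tᶜ : ℚ) (exp ℚ) := by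
    rw [sub_eq_neg_add, ← card_univ, ← prod_const, prod_add]
    refine sum_congr rfl fun t _ => ?_
    rw [prod_const, prod_const, ← compl_eq_univ_sdiff, ← exp_pow_eq_rescale_exp]
    simp
  rw [expand, map_sum, sum_div]
  refine sum_congr rfl fun t _ => ?_
  rw [coeff_C_mul, coeff_rescale, coeff_exp, Algebra.algebraMap_self, RingHom.id_apply]
  ring

theorem card_surjective_eq_factorial_mul_coeff :
    (Nat.card {f : α → β // Function.Surjective f} : ℚ) =
      (Fintype.card α).factorial * coeff (Fintype.card α) ((exp ℚ - 1) ^ Fintype.card β) := by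
  rw [coeff_exp_sub_one_pow_card, mul_div_cancel₀ _ (by positivity), Nat.card_eq_fintype_card]
  exact_mod_cast card_surjective_eq_sum_powerset

end Surjections

section fiber

variable {α β : Type*} [Fintype α] [DecidableEq β]

def fiber (f : α → β) (b : β) : Finset α := {a | f a = b}

@[simp] lemma mem_fiber {f : α → β} {b : β} {a : α} : a ∈ fiber f b ↔ f a = b := by
  simp [fiber]

lemma fiber_injective {f : α → β} (hf : Function.Surjective f) : Function.Injective (fiber f) := by
  intro b b' h
  obtain ⟨a, rfl⟩ := hf b
  simpa using (h ▸ mem_fiber.2 rfl : a ∈ fiber f b')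

lemma eq_of_fiber_eq {f g : α → β} (h : ∀ b, fiber f b = fiber g b) : f = g :=
  funext fun a => (mem_fiber.1 (h (f a) ▸ mem_fiber.2 rfl)).symm

end fiber

abbrev MixedPartition (α ι : Type*) [Fintype α] [DecidableEq α] [Fintype ι] (c : ι → ℕ) :=
  {x : Σ A : ι → Finset α, ∀ i, Finpartition (A i) //
    (∀ i j, i ≠ j → Disjoint (x.1 i) (x.1 j)) ∧ univ.biUnion x.1 = univ ∧
    ∀ i, #(x.2 i).parts = c i}

theorem mixedPart_eq_card (n k : ℕ) (c : Fin k → ℕ) :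
    mixedPart n k c = Nat.card (MixedPartition (Fin n) (Fin k) c) := rfl

namespace MixedPartition

variable {α ι : Type*} [Fintype α] [DecidableEq α] {c : ι → ℕ}

section ofSurjective

variable [DecidableEq ι] {f : α → Σ i, Fin (c i)} (hf : Function.Surjective f)

def fiberPartition (i : ι) : Finpartition ({a | (f a).1 = i} : Finset α) :=
  .ofExistsUnique (univ.image fun j => fiber f ⟨i, j⟩)
    (by
      simp only [mem_image, mem_univ, true_and, forall_exists_index, forall_apply_eq_imp_iff]
      intro j a ha
      simp [(mem_fiber.1 ha)])
    (by
      intro a ha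
      rcases hfa : f a with ⟨i', j⟩
      obtain rfl : i' = i := by simpa [hfa] using ha
      refine ⟨fiber f ⟨i', j⟩, ⟨mem_image_of_mem _ (mem_univ j), mem_fiber.2 hfa⟩, ?_⟩
      rintro t ⟨ht, hat⟩
      obtain ⟨j', -, rfl⟩ := mem_image.1 ht
      rw [← hfa, ← mem_fiber.1 hat])
    (by
      simp only [mem_image, mem_univ, true_and, not_exists]
      intro j h
      obtain ⟨a, ha⟩ := hf ⟨i, j⟩
      simpa [h] using (mem_fiber.2 ha))

lemma fiber_mem_parts_fiberPartition (i : ι) (j : Fin (c i)) :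
    fiber f ⟨i, j⟩ ∈ (fiberPartition hf i).parts :=
  mem_image_of_mem _ (mem_univ j)

lemma card_parts_fiberPartition (i : ι) : #(fiberPartition hf i).parts = c i := by
  rw [fiberPartition, Finpartition.ofExistsUnique_parts, card_image_of_injective _
    (f := fun j => fiber f ⟨i, j⟩) ((fiber_injective hf).comp sigma_mk_injective), card_fin]

variable [Fintype ι]

def ofSurjective : MixedPartition α ι c :=
  ⟨⟨fun i => {a | (f a).1 = i}, fiberPartition hf⟩,
    fun i j hij => disjoint_left.2 fun a hi hj => hij ((mem_filter.1 hi).2 ▸ (mem_filter.1 hj).2),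
    by ext a; simp,
    card_parts_fiberPartition hf⟩

end ofSurjective

variable [Fintype ι]

lemma ext {x y : MixedPartition α ι c} (hA : x.1.1 = y.1.1)
    (hP : ∀ i, (x.1.2 i).parts = (y.1.2 i).parts) : x = y := by
  obtain ⟨⟨A, P⟩, hx⟩ := x
  obtain ⟨⟨A', P'⟩, hy⟩ := y
  obtain rfl : A = A' := hA
  obtain rfl : P = P' := funext fun i => Finpartition.ext (hP i)
  rfl

variable (x : MixedPartition α ι c)

lemma existsUnique_mem (a : α) : ∃! i, a ∈ x.1.1 i := by
  obtain ⟨i, -, hi⟩ := mem_biUnion.1 (x.2.2.1 ▸ mem_univ a)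
  exact ⟨i, hi, fun j hj => by_contra fun hji => disjoint_left.1 (x.2.1 j i hji) hj hi⟩

noncomputable def labelOf (a : α) : ι := Fintype.choose _ (x.existsUnique_mem a)

lemma mem_labelOf (a : α) : a ∈ x.1.1 (x.labelOf a) :=
  Fintype.choose_spec _ (x.existsUnique_mem a)

lemma labelOf_eq {a : α} {i : ι} (h : a ∈ x.1.1 i) : x.labelOf a = i :=
  (x.existsUnique_mem a).unique (x.mem_labelOf a) h

section cellOf

variable (E : ∀ i, Fin (c i) ≃ (x.1.2 i).parts)

noncomputable def cellOf (a : α) : Σ i, Fin (c i) :=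
  ⟨x.labelOf a, (E _).symm ⟨_, (Finpartition.part_mem _).2 (x.mem_labelOf a)⟩⟩

lemma cellOf_eq {a : α} {i : ι} (ha : a ∈ x.1.1 i) :
    x.cellOf E a = ⟨i, (E i).symm ⟨_, (Finpartition.part_mem _).2 ha⟩⟩ := by
  obtain rfl := x.labelOf_eq ha
  rfl

variable [DecidableEq ι]

lemma fiber_cellOf (i : ι) (j : Fin (c i)) : fiber (x.cellOf E) ⟨i, j⟩ = E i j := by
  ext a
  rw [mem_fiber]
  constructor
  · intro h
    have hi : x.labelOf a = i := congrArg Sigma.fst h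
    have ha : a ∈ x.1.1 i := hi ▸ x.mem_labelOf a
    rw [cellOf_eq x E ha, Sigma.mk.inj_iff, heq_iff_eq, Equiv.symm_apply_eq] at h
    exact congrArg Subtype.val h.2 ▸ (Finpartition.mem_part_self _).2 ha
  · intro ha
    have ha' : a ∈ x.1.1 i := (x.1.2 i).le (E i j).2 ha
    rw [cellOf_eq x E ha']
    refine congrArg (Sigma.mk i) ((Equiv.symm_apply_eq _).2 ?_)
    exact (Subtype.ext (Finpartition.part_eq_of_mem _ (E i j).2 ha))

lemma cellOf_surjective : Function.Surjective (x.cellOf E) := by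
  rintro ⟨i, j⟩
  obtain ⟨a, ha⟩ := Finpartition.nonempty_of_mem_parts _ (E i j).2
  exact ⟨a, mem_fiber.1 (x.fiber_cellOf E i j ▸ ha)⟩

lemma ofSurjective_cellOf : ofSurjective (x.cellOf_surjective E) = x := by
  refine ext (funext fun i => ?_) fun i => ?_
  · ext a
    simpa [ofSurjective] using ⟨fun h => h ▸ x.mem_labelOf a, x.labelOf_eq⟩
  · ext t
    simp only [ofSurjective, fiberPartition, Finpartition.ofExistsUnique_parts, fiber_cellOf,
      mem_image, mem_univ, true_and]
    exact ⟨by rintro ⟨j, rfl⟩; exact (E i j).2, fun ht => ⟨(E i).symm ⟨t, ht⟩, by simp⟩⟩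


end cellOf

variable [DecidableEq ι] {x} {f : α → Σ i, Fin (c i)} (hf : Function.Surjective f)

noncomputable def labelingOfSurjective (h : ofSurjective hf = x) (i : ι) :
    Fin (c i) ≃ (x.1.2 i).parts :=
  Equiv.ofBijective
    (fun j => ⟨fiber f ⟨i, j⟩, by subst h; exact fiber_mem_parts_fiberPartition hf i j⟩)
    ⟨fun _ _ hj => sigma_mk_injective (β := fun i => Fin (c i))
        (fiber_injective hf (congrArg Subtype.val hj)), by
      rintro ⟨t, ht⟩
      subst h
      obtain ⟨j, -, rfl⟩ := mem_image.1 ht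
      exact ⟨j, rfl⟩⟩

lemma cellOf_labelingOfSurjective (h : ofSurjective hf = x) :
    x.cellOf (labelingOfSurjective hf h) = f :=
  eq_of_fiber_eq fun ⟨i, j⟩ => x.fiber_cellOf _ i j

variable (x)

noncomputable def ofSurjectiveFiberEquiv :
    {f : {f : α → Σ i, Fin (c i) // Function.Surjective f} // ofSurjective f.2 = x} ≃
      ∀ i, Fin (c i) ≃ (x.1.2 i).parts where
  toFun f := labelingOfSurjective f.1.2 f.2
  invFun E := ⟨⟨x.cellOf E, x.cellOf_surjective E⟩, x.ofSurjective_cellOf E⟩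
  left_inv f := Subtype.ext (Subtype.ext (cellOf_labelingOfSurjective f.1.2 f.2))
  right_inv E := funext fun i => Equiv.ext fun j => Subtype.ext (x.fiber_cellOf E i j)

theorem card_surjective_eq_card_mul_prod_factorial :
    Nat.card {f : α → Σ i, Fin (c i) // Function.Surjective f} =
      Nat.card (MixedPartition α ι c) * ∏ i, (c i).factorial := by
  have card_fiber (x : MixedPartition α ι c) :
      Nat.card {f : {f : α → Σ i, Fin (c i) // Function.Surjective f} // ofSurjective f.2 = x} =
        ∏ i, (c i).factorial := by
    rw [Nat.card_congr (ofSurjectiveFiberEquiv x), Nat.card_pi]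
    refine prod_congr rfl fun i _ => ?_
    have : Fin (c i) ≃ (x.1.2 i).parts := (Fintype.equivFinOfCardEq (by simp [x.2.2.2 i])).symm
    rw [Nat.card_eq_fintype_card, Fintype.card_equiv this, Fintype.card_fin]
  rw [← Nat.card_congr (Equiv.sigmaFiberEquiv fun f => ofSurjective f.2), Nat.card_sigma]
  rw [sum_congr rfl fun x _ => card_fiber x, sum_const, card_univ, ← Nat.card_eq_fintype_card,
    smul_eq_mul]

end MixedPartition

theorem mixedPart_egf_general (k : ℕ) (c : Fin k → ℕ) :
    (PowerSeries.mk fun n => (mixedPart n k c : ℚ) / n.factorial) =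
      PowerSeries.C (∏ i, ((c i).factorial : ℚ))⁻¹ *
        (PowerSeries.exp ℚ - 1) ^ (∑ i, c i) := by
  ext n
  have count : (mixedPart n k c : ℚ) * ∏ i, ((c i).factorial : ℚ) =
      n.factorial * coeff n ((exp ℚ - 1) ^ ∑ i, c i) := by
    have := card_surjective_eq_factorial_mul_coeff (α := Fin n) (β := Σ i, Fin (c i))
    rw [MixedPartition.card_surjective_eq_card_mul_prod_factorial, ← mixedPart_eq_card] at this
    simpa using this
  rw [coeff_mk, coeff_C_mul, eq_inv_mul_iff_mul_eq₀ (by positivity), mul_comm, div_mul_eq_mul_div,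
    count, mul_div_cancel_left₀ _ (by positivity)]

theorem mixedPart_egf (k : ℕ) (hk : 1 ≤ k) (c : Fin k → ℕ) :
    (PowerSeries.mk fun n => (mixedPart n k c : ℚ) / n.factorial) =
      PowerSeries.C (∏ i, ((c i).factorial : ℚ))⁻¹ *
        (PowerSeries.exp ℚ - 1) ^ (∑ i, c i) :=
  mixedPart_egf_general k c
end

section
/- For positive integers n, k and r with r ≤ k ≤ n, the r-Stirling number of the second kind satisfies {n brace k}_r = Σ_{i=0}^{r} (r choose i) · S(n−r, i+1, k−r). -/
/-!
Split off the special elements `1, …, r`. A partition of `{1, …, n}` into `k` blocks that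
separates them amounts to a family `(B_j)_{j ≤ r}` of pairwise disjoint, possibly empty, subsets
of the other `n - r` elements (`B_j` is the block of `j` with `j` removed), together with a
partition of the elements outside `⋃ B_j` into `k - r` blocks. Sorting these families by the set
of indices `j` with `B_j` nonempty, which has some size `i` and is chosen in `r.choose i` ways,
each class is counted by `S(n - r, i + 1, k - r)`.

The special elements are encoded as the left summand of `Fin r ⊕ Fin (n - r) ≃ Fin n`.
-/

/-- The mixed Stirling number of the second kind `S(n, k, r)`: the number of pairs
`(π, (B_2, …, B_k))` where `B_2, …, B_k` are pairwise disjoint nonempty subsets of `{1, …, n}`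
and `π` is a partition of the complement of their union into exactly `r` nonempty blocks. -/
noncomputable def mixedStirling (n k r : ℕ) : ℕ :=
  Nat.card {x : Σ B : Fin (k - 1) → Finset (Fin n),
      Finpartition ((Finset.univ : Finset (Fin n)) \ Finset.univ.biUnion B) //
    (∀ i, (x.1 i).Nonempty) ∧
    (∀ i j, i ≠ j → Disjoint (x.1 i) (x.1 j)) ∧
    x.2.parts.card = r}

/-- The `r`-Stirling number of the second kind `{n brace k}_r`: the number of partitions of
`{1, …, n}` into exactly `k` nonempty blocks such that the elements `1, …, r` lie in distinct
blocks. -/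
noncomputable def rStirling (n k r : ℕ) : ℕ :=
  Nat.card {P : Finpartition (Finset.univ : Finset (Fin n)) //
    P.parts.card = k ∧
      ∀ B ∈ P.parts, (B.filter (fun a : Fin n => (a : ℕ) < r)).card ≤ 1}

open Finset Function Sum

section Generalities

variable {ι κ β γ : Type*}

theorem Finpartition.mem_part_comm [DecidableEq γ] {s : Finset γ} (P : Finpartition s)
    {a b : γ} : a ∈ P.part b ↔ b ∈ P.part a := by
  simp only [mem_part_iff_exists, and_comm (a := a ∈ _)]

theorem Disjoint.toRight {u v : Finset (ι ⊕ β)} (h : Disjoint u v) :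
    Disjoint u.toRight v.toRight := by
  simp only [disjoint_left, mem_toRight]
  exact fun _ hb => disjoint_left.1 h hb

theorem Finset.univ_biUnion_comp_of_eq_empty [DecidableEq β] [Fintype ι] [Fintype κ]
    {φ : κ → ι} {f : ι → Finset β} (hf : ∀ j, (¬∃ a, φ a = j) → f j = ∅) :
    univ.biUnion (f ∘ φ) = univ.biUnion f := by
  ext b
  simp only [mem_biUnion, mem_univ, true_and, comp_apply]
  refine ⟨fun ⟨a, hb⟩ => ⟨_, hb⟩, fun ⟨j, hb⟩ => ?_⟩
  by_cases hj : ∃ a, φ a = j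
  · obtain ⟨a, rfl⟩ := hj
    exact ⟨a, hb⟩
  · simp [hf j hj] at hb

theorem Pairwise.disjoint_extend_empty {φ : κ → ι} (hφ : Injective φ) {g : κ → Finset β}
    (hg : Pairwise (Disjoint on g)) : Pairwise (Disjoint on extend φ g fun _ => ∅) := by
  intro j j' hjj'
  by_cases hj : ∃ a, φ a = j
  · by_cases hj' : ∃ a, φ a = j'
    · obtain ⟨a, rfl⟩ := hj
      obtain ⟨a', rfl⟩ := hj'
      simpa [onFun, hφ.extend_apply] using hg (ne_of_apply_ne φ hjj')
    · simp [onFun, extend_apply' _ _ _ hj']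
  · simp [onFun, extend_apply' _ _ _ hj]

def Finpartition.univCongr [Fintype ι] [Fintype β] [DecidableEq ι] [DecidableEq β]
    (e : ι ≃ β) : Finpartition (univ : Finset ι) ≃ Finpartition (univ : Finset β) where
  toFun P := (P.map (e.finsetCongr.toOrderIso (fun _ _ => map_subset_map.2)
    fun _ _ => map_subset_map.2)).copy (map_univ_equiv e)
  invFun P := (P.map (e.symm.finsetCongr.toOrderIso (fun _ _ => map_subset_map.2)
    fun _ _ => map_subset_map.2)).copy (map_univ_equiv e.symm)
  left_inv P := Finpartition.ext <| by
    change (P.parts.map e.finsetCongr.toEmbedding).map e.symm.finsetCongr.toEmbedding = P.parts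
    rw [← Equiv.finsetCongr_symm, Finset.map_map, ← Equiv.trans_toEmbedding]
    simp
  right_inv P := Finpartition.ext <| by
    change (P.parts.map e.symm.finsetCongr.toEmbedding).map e.finsetCongr.toEmbedding = P.parts
    rw [← Equiv.finsetCongr_symm, Finset.map_map, ← Equiv.trans_toEmbedding]
    simp

theorem Finpartition.parts_univCongr [Fintype ι] [Fintype β] [DecidableEq ι] [DecidableEq β]
    (e : ι ≃ β) (P : Finpartition (univ : Finset ι)) :
    (univCongr e P).parts = P.parts.map e.finsetCongr.toEmbedding := rfl

theorem Finset.map_inl_toLeft (u : Finset (ι ⊕ β)) :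
    u.toLeft.map .inl = u.filter (·.isLeft) := by
  ext (x | x) <;> simp

theorem val_finSumFinEquiv_lt_iff {r m : ℕ} (x : Fin r ⊕ Fin m) :
    (finSumFinEquiv x : ℕ) < r ↔ x.isLeft := by
  cases x <;> simp

end Generalities

structure FamilyPartition (ι β : Type*) [Fintype ι] [Fintype β] [DecidableEq β] (s : ℕ) where
  sets : ι → Finset β
  pairwise_disjoint : Pairwise (Disjoint on sets)
  rest : Finpartition (univ \ univ.biUnion sets)
  card_rest : #rest.parts = s

namespace FamilyPartition

variable {ι κ β : Type*} [Fintype ι] [Fintype κ] [Fintype β] [DecidableEq β] {s : ℕ}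

theorem ext {x y : FamilyPartition ι β s} (h : x.sets = y.sets)
    (h' : x.rest.parts = y.rest.parts) : x = y := by
  cases x
  cases y
  subst h
  simpa using Finpartition.ext h'

instance : Finite (FamilyPartition ι β s) :=
  Finite.of_injective (fun x => (x.sets, x.rest.parts)) fun _ _ h =>
    ext (congrArg Prod.fst h) (congrArg Prod.snd h)

theorem eq_of_mem_sets (x : FamilyPartition ι β s) {b : β} {j j' : ι} (hj : b ∈ x.sets j)
    (hj' : b ∈ x.sets j') : j = j' :=
  by_contra fun h => disjoint_left.1 (x.pairwise_disjoint h) hj hj'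

theorem notMem_sets_of_mem_rest (x : FamilyPartition ι β s) {C : Finset β}
    (hC : C ∈ x.rest.parts) {b : β} (hb : b ∈ C) (j : ι) : b ∉ x.sets j := by
  have := x.rest.le hC hb
  simp_all

def support (x : FamilyPartition ι β s) : Finset ι := {j | (x.sets j).Nonempty}

theorem nonempty_iff_mem_support (x : FamilyPartition ι β s) {j : ι} :
    (x.sets j).Nonempty ↔ j ∈ x.support := by
  simp [support]

variable {φ : κ → ι} (hφ : Injective φ)

def restrict (x : FamilyPartition ι β s) (hx : ∀ j, (¬∃ a, φ a = j) → x.sets j = ∅) :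
    FamilyPartition κ β s where
  sets := x.sets ∘ φ
  pairwise_disjoint := x.pairwise_disjoint.comp_of_injective hφ
  rest := x.rest.copy (by rw [univ_biUnion_comp_of_eq_empty hx])
  card_rest := x.card_rest

noncomputable def extendByEmpty (y : FamilyPartition κ β s) : FamilyPartition ι β s where
  sets := extend φ y.sets fun _ => ∅
  pairwise_disjoint := Pairwise.disjoint_extend_empty hφ y.pairwise_disjoint
  rest := y.rest.copy <| by
    rw [← univ_biUnion_comp_of_eq_empty (φ := φ) (f := extend φ y.sets fun _ => ∅)
      fun j hj => extend_apply' _ _ _ hj, extend_comp hφ]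
  card_rest := y.card_rest

theorem extendByEmpty_sets_apply (y : FamilyPartition κ β s) (a : κ) :
    (y.extendByEmpty hφ).sets (φ a) = y.sets a :=
  hφ.extend_apply y.sets (fun _ => ∅) a

theorem extendByEmpty_sets_of_not_exists (y : FamilyPartition κ β s) {j : ι}
    (hj : ¬∃ a, φ a = j) : (y.extendByEmpty hφ).sets j = ∅ :=
  extend_apply' y.sets (fun _ => ∅) j hj

noncomputable def restrictSupportEquiv {T : Finset ι} (e : κ ≃ T) :
    {x : FamilyPartition ι β s // x.support = T} ≃
      {y : FamilyPartition κ β s // ∀ a, (y.sets a).Nonempty} :=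
  have hφ : Injective fun a => (e a : ι) := Subtype.val_injective.comp e.injective
  have hrange {j : ι} : (∃ a, (e a : ι) = j) ↔ j ∈ T :=
    ⟨fun ⟨a, ha⟩ => ha ▸ (e a).2, fun hj => ⟨e.symm ⟨j, hj⟩, by simp⟩⟩
  have sets_eq_empty (x : {x : FamilyPartition ι β s // x.support = T}) (j : ι)
      (hj : ¬∃ a, (e a : ι) = j) : x.1.sets j = ∅ := by
    rw [← not_nonempty_iff_eq_empty, nonempty_iff_mem_support, x.2, ← hrange]
    exact hj
  { toFun x := ⟨x.1.restrict hφ (sets_eq_empty x), fun a => by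
      simp [restrict, nonempty_iff_mem_support, x.2]⟩
    invFun y := ⟨y.1.extendByEmpty hφ, by
      ext j
      rw [← nonempty_iff_mem_support, ← hrange]
      by_cases hj : ∃ a, (e a : ι) = j
      · obtain ⟨a, rfl⟩ := hj
        simpa [extendByEmpty_sets_apply] using y.2 a
      · simpa [extendByEmpty_sets_of_not_exists hφ y.1 hj] using hj⟩
    left_inv x := Subtype.ext <| ext (funext fun j => by
      by_cases hj : ∃ a, (e a : ι) = j
      · obtain ⟨a, rfl⟩ := hj
        exact extendByEmpty_sets_apply hφ _ a
      · rw [extendByEmpty_sets_of_not_exists hφ _ hj, sets_eq_empty x j hj]) rfl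
    right_inv y := Subtype.ext <| ext (extend_comp hφ y.1.sets fun _ => ∅) rfl }

end FamilyPartition

theorem mixedStirling_succ_eq_card (m i s : ℕ) :
    mixedStirling m (i + 1) s =
      Nat.card {y : FamilyPartition (Fin i) (Fin m) s // ∀ a, (y.sets a).Nonempty} :=
  Nat.card_congr
    { toFun := fun x => ⟨⟨x.1.1, x.2.2.1, x.1.2, x.2.2.2⟩, x.2.1⟩
      invFun := fun y => ⟨⟨y.1.sets, y.1.rest⟩, y.2, y.1.pairwise_disjoint, y.1.card_rest⟩
      left_inv := fun _ => rfl
      right_inv := fun _ => rfl }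

theorem card_familyPartition (ι : Type*) [Fintype ι] (m s : ℕ) :
    Nat.card (FamilyPartition ι (Fin m) s) =
      ∑ i ∈ range (Fintype.card ι + 1),
        (Fintype.card ι).choose i * mixedStirling m (i + 1) s := by
  calc Nat.card (FamilyPartition ι (Fin m) s)
      = ∑ T : Finset ι, Nat.card {x : FamilyPartition ι (Fin m) s // x.support = T} := by
        rw [← Nat.card_sigma]
        exact Nat.card_congr (Equiv.sigmaFiberEquiv _).symm
    _ = ∑ T ∈ (univ : Finset ι).powerset, mixedStirling m (#T + 1) s := by
        rw [powerset_univ]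
        refine sum_congr rfl fun T _ => ?_
        rw [mixedStirling_succ_eq_card]
        exact Nat.card_congr (FamilyPartition.restrictSupportEquiv T.equivFin.symm)
    _ = _ := by
        rw [sum_powerset_apply_card fun i => mixedStirling m (i + 1) s, card_univ]
        rfl

section SumPartition

variable {ι β : Type*} [Fintype ι] [Fintype β] [DecidableEq ι] [DecidableEq β] {s : ℕ}

namespace Finpartition

variable (P : Finpartition (univ : Finset (ι ⊕ β)))

def rightBlocks : Finpartition (univ \ univ.biUnion fun j => (P.part (inl j)).toRight) := by
  refine ofExistsUnique ({B ∈ P.parts | B.toLeft = ∅}.image toRight) ?_ ?_ ?_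
  · simp only [mem_image, mem_filter]
    rintro _ ⟨B, ⟨hB, hBl⟩, rfl⟩ b hb
    simp only [mem_sdiff, mem_univ, mem_biUnion, mem_toRight, true_and, not_exists]
    intro j hj
    have : inl j ∈ B := P.part_eq_of_mem hB (mem_toRight.1 hb) ▸ P.mem_part_comm.1 hj
    simp [← mem_toLeft, hBl] at this
  · intro b hb
    simp only [mem_sdiff, mem_univ, mem_biUnion, mem_toRight, true_and, not_exists] at hb
    refine ⟨(P.part (inr b)).toRight, ?_, ?_⟩
    · refine ⟨mem_image_of_mem _ (mem_filter.2 ⟨P.part_mem.2 (mem_univ _), ?_⟩), ?_⟩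
      · ext j
        simpa [P.mem_part_comm] using hb j
      · simp
    · simp only [mem_image, mem_filter, and_imp, forall_exists_index]
      rintro _ B hB - rfl hbB
      rw [P.part_eq_of_mem hB (mem_toRight.1 hbB)]
  · simp only [mem_image, mem_filter, not_exists, not_and, and_imp]
    intro B hB hBl hBr
    apply P.ne_empty hB
    rw [← toLeft_disjSum_toRight (u := B), hBl, hBr, disjSum_empty, map_empty]

theorem parts_rightBlocks : P.rightBlocks.parts = {B ∈ P.parts | B.toLeft = ∅}.image toRight :=
  rfl

theorem image_disjSum_empty_rightBlocks :
    P.rightBlocks.parts.image (disjSum ∅) = {B ∈ P.parts | B.toLeft = ∅} := by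
  rw [parts_rightBlocks, image_image]
  refine (image_congr fun B hB => ?_).trans image_id
  rw [comp_apply, id, ← (mem_filter.1 hB).2, toLeft_disjSum_toRight]

theorem filter_toLeft_ne_empty :
    {B ∈ P.parts | ¬B.toLeft = ∅} = univ.image fun j => P.part (inl j) := by
  ext B
  simp only [mem_filter, mem_image, mem_univ, true_and, ← nonempty_iff_ne_empty]
  constructor
  · rintro ⟨hB, j, hj⟩
    exact ⟨j, P.part_eq_of_mem hB (mem_toLeft.1 hj)⟩
  · rintro ⟨j, rfl⟩
    exact ⟨P.part_mem.2 (mem_univ _), j, by simp⟩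

variable {P}

theorem toLeft_part_inl (hP : ∀ B ∈ P.parts, #B.toLeft ≤ 1) (j : ι) :
    (P.part (inl j)).toLeft = {j} :=
  eq_singleton_iff_unique_mem.2 ⟨by simp, fun _ hj' =>
    card_le_one.1 (hP _ (P.part_mem.2 (mem_univ _))) _ hj' _ (by simp)⟩

theorem disjSum_toRight_part_inl (hP : ∀ B ∈ P.parts, #B.toLeft ≤ 1) (j : ι) :
    ({j} : Finset ι).disjSum (P.part (inl j)).toRight = P.part (inl j) := by
  rw [← toLeft_part_inl hP, toLeft_disjSum_toRight]

theorem pairwise_disjoint_toRight_part_inl (hP : ∀ B ∈ P.parts, #B.toLeft ≤ 1) :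
    Pairwise (Disjoint on fun j => (P.part (inl j)).toRight) := by
  intro j j' hjj'
  have hne : P.part (inl j) ≠ P.part (inl j') := fun h => hjj' <| singleton_injective <| by
    rw [← toLeft_part_inl hP j, h, toLeft_part_inl hP]
  exact (P.disjoint (P.part_mem.2 (mem_univ _)) (P.part_mem.2 (mem_univ _)) hne).toRight

theorem card_parts_eq_card_add_card_rightBlocks (hP : ∀ B ∈ P.parts, #B.toLeft ≤ 1) :
    #P.parts = Fintype.card ι + #P.rightBlocks.parts := by
  rw [← card_filter_add_card_filter_not (fun B => B.toLeft = ∅), add_comm,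
    filter_toLeft_ne_empty, ← image_disjSum_empty_rightBlocks,
    card_image_of_injective _ fun j j' h => ?_, card_univ,
    card_image_of_injective _ fun C C' h => by simpa using h]
  simpa [toLeft_part_inl hP] using congrArg toLeft h

end Finpartition

namespace FamilyPartition

variable (x : FamilyPartition ι β s)

def toFinpartition : Finpartition (univ : Finset (ι ⊕ β)) := by
  refine Finpartition.ofExistsUnique (univ.image (fun j => ({j} : Finset ι).disjSum (x.sets j)) ∪
    x.rest.parts.image (disjSum ∅)) (fun _ _ => subset_univ _) ?_ ?_
  · simp only [mem_union, mem_image, mem_univ, true_and]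
    rintro (j | b) -
    · refine ⟨({j} : Finset ι).disjSum (x.sets j), ⟨.inl ⟨j, rfl⟩, by simp⟩, ?_⟩
      rintro _ ⟨⟨j', rfl⟩ | ⟨C, -, rfl⟩, h⟩ <;> simp_all
    · by_cases hb : ∃ j, b ∈ x.sets j
      · obtain ⟨j, hj⟩ := hb
        refine ⟨({j} : Finset ι).disjSum (x.sets j), ⟨.inl ⟨j, rfl⟩, by simpa⟩, ?_⟩
        rintro _ ⟨⟨j', rfl⟩ | ⟨C, hC, rfl⟩, h⟩ <;> rw [inr_mem_disjSum] at h
        · rw [x.eq_of_mem_sets hj h]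
        · exact absurd hj (x.notMem_sets_of_mem_rest hC h j)
      · obtain ⟨C, hC, hbC⟩ := x.rest.exists_mem (by simpa using hb)
        refine ⟨(∅ : Finset ι).disjSum C, ⟨.inr ⟨C, hC, rfl⟩, by simpa⟩, ?_⟩
        rintro _ ⟨⟨j', rfl⟩ | ⟨C', hC', rfl⟩, h⟩ <;> rw [inr_mem_disjSum] at h
        · exact absurd ⟨j', h⟩ hb
        · rw [x.rest.eq_of_mem_parts hC' hC h hbC]
  · simp only [mem_union, mem_image, mem_univ, true_and, not_or, not_exists, not_and]
    refine ⟨fun j h => ?_, fun C hC h => x.rest.ne_empty hC ?_⟩ <;> simp_all [Finset.ext_iff]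

theorem parts_toFinpartition :
    x.toFinpartition.parts = univ.image (fun j => ({j} : Finset ι).disjSum (x.sets j)) ∪
      x.rest.parts.image (disjSum ∅) :=
  rfl

theorem part_inl_toFinpartition (j : ι) :
    x.toFinpartition.part (inl j) = ({j} : Finset ι).disjSum (x.sets j) :=
  x.toFinpartition.part_eq_of_mem (mem_union_left _ (mem_image_of_mem _ (mem_univ j))) (by simp)

theorem toRight_part_inl_toFinpartition (j : ι) :
    (x.toFinpartition.part (inl j)).toRight = x.sets j := by
  rw [part_inl_toFinpartition, toRight_disjSum]

theorem filter_toLeft_eq_empty_toFinpartition :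
    {B ∈ x.toFinpartition.parts | B.toLeft = ∅} = x.rest.parts.image (disjSum ∅) := by
  rw [parts_toFinpartition, filter_union, filter_image, filter_image]
  simp [-empty_disjSum]

theorem parts_rightBlocks_toFinpartition :
    x.toFinpartition.rightBlocks.parts = x.rest.parts := by
  rw [Finpartition.parts_rightBlocks, filter_toLeft_eq_empty_toFinpartition, image_image]
  exact (image_congr fun C _ => toRight_disjSum).trans image_id

theorem card_toLeft_le_one : ∀ B ∈ x.toFinpartition.parts, #B.toLeft ≤ 1 := by
  simp only [parts_toFinpartition, mem_union, mem_image, mem_univ, true_and]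
  rintro _ (⟨j, rfl⟩ | ⟨C, -, rfl⟩) <;> simp [-empty_disjSum]

theorem card_parts_toFinpartition : #x.toFinpartition.parts = Fintype.card ι + s := by
  rw [Finpartition.card_parts_eq_card_add_card_rightBlocks x.card_toLeft_le_one,
    parts_rightBlocks_toFinpartition, x.card_rest]

end FamilyPartition

namespace Finpartition

variable {P : Finpartition (univ : Finset (ι ⊕ β))} (hP : ∀ B ∈ P.parts, #B.toLeft ≤ 1)
  (hs : #P.parts = Fintype.card ι + s)

def toFamilyPartition : FamilyPartition ι β s where
  sets j := (P.part (inl j)).toRight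
  pairwise_disjoint := pairwise_disjoint_toRight_part_inl hP
  rest := P.rightBlocks
  card_rest := by
    have := card_parts_eq_card_add_card_rightBlocks hP
    omega

theorem toFinpartition_toFamilyPartition : (toFamilyPartition hP hs).toFinpartition = P := by
  refine Finpartition.ext ?_
  rw [FamilyPartition.parts_toFinpartition]
  simp only [toFamilyPartition, disjSum_toRight_part_inl hP]
  rw [← filter_toLeft_ne_empty, image_disjSum_empty_rightBlocks, union_comm,
    filter_union_filter_not_eq]

end Finpartition

def FamilyPartition.equivFinpartition : FamilyPartition ι β s ≃
    {P : Finpartition (univ : Finset (ι ⊕ β)) //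
      #P.parts = Fintype.card ι + s ∧ ∀ B ∈ P.parts, #B.toLeft ≤ 1} where
  toFun x := ⟨x.toFinpartition, x.card_parts_toFinpartition, x.card_toLeft_le_one⟩
  invFun P := Finpartition.toFamilyPartition P.2.2 P.2.1
  left_inv x := FamilyPartition.ext (funext x.toRight_part_inl_toFinpartition)
    x.parts_rightBlocks_toFinpartition
  right_inv P := Subtype.ext (Finpartition.toFinpartition_toFamilyPartition P.2.2 P.2.1)

end SumPartition

theorem rStirling_eq_card_familyPartition {n k r : ℕ} (hrk : r ≤ k) (hkn : k ≤ n) :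
    rStirling n k r = Nat.card (FamilyPartition (Fin r) (Fin (n - r)) (k - r)) := by
  let e : Fin r ⊕ Fin (n - r) ≃ Fin n := finSumFinEquiv.trans (finCongr (by omega))
  rw [Nat.card_congr FamilyPartition.equivFinpartition, Fintype.card_fin, Nat.add_sub_cancel' hrk]
  refine Nat.card_congr ((Finpartition.univCongr e).subtypeEquiv fun P => ?_).symm
  rw [Finpartition.parts_univCongr, card_map, forall_mem_map]
  refine and_congr_right' (forall₂_congr fun B _ => ?_)
  rw [Equiv.coe_toEmbedding, Equiv.finsetCongr_apply, filter_map, card_map, ← card_map .inl,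
    map_inl_toLeft]
  simp [e, comp_def, val_finSumFinEquiv_lt_iff]

theorem rStirling_eq_sum_mixedStirling_general (n k r : ℕ)
    (hrk : r ≤ k) (hkn : k ≤ n) :
    rStirling n k r =
      ∑ i ∈ Finset.range (r + 1),
        r.choose i * mixedStirling (n - r) (i + 1) (k - r) := by
  rw [rStirling_eq_card_familyPartition hrk hkn, card_familyPartition, Fintype.card_fin]

theorem rStirling_eq_sum_mixedStirling (n k r : ℕ)
    (hr : 1 ≤ r) (hrk : r ≤ k) (hkn : k ≤ n) :
    rStirling n k r =
      ∑ i ∈ Finset.range (r + 1),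
        r.choose i * mixedStirling (n - r) (i + 1) (k - r) :=
  rStirling_eq_sum_mixedStirling_general n k r hrk hkn
end
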